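/- arXiv:1311.0451 — 7 statements merged into one kernel-verified Lean document; each statement's English description precedes it below -/
import Mathlib

section
/- If a dynamical system (X,f) on a compact metric space has the shadowing property, then the restriction of f to its non-wandering set Ω(f) also has the shadowing property. -/
open Set Function

variable {X : Type*}

/-- A `δ`-pseudo-orbit of `f`. -/
def IsPseudoOrbit [MetricSpace X] (f : X → X) (δ : ℝ) (x : ℕ → X) : Prop :=
  ∀ n : ℕ, dist (f (x n)) (x (n + 1)) < δ

/-- `z` ε-traces the sequence `x`. -/
def Traces [MetricSpace X] (f : X → X) (ε : ℝ) (z : X) (x : ℕ → X) : Prop :=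
  ∀ n : ℕ, dist (f^[n] z) (x n) < ε

/-- The shadowing property. -/
def HasShadowing [MetricSpace X] (f : X → X) : Prop :=
  ∀ ε > (0 : ℝ), ∃ δ > (0 : ℝ), ∀ x : ℕ → X, IsPseudoOrbit f δ x → ∃ z : X, Traces f ε z x

/-- The shadowing property of the restriction of `f` to an invariant set `S`. -/
def HasShadowingOn [MetricSpace X] (f : X → X) (S : Set X) : Prop :=
  ∀ ε > (0 : ℝ), ∃ δ > (0 : ℝ), ∀ x : ℕ → X, (∀ n, x n ∈ S) → IsPseudoOrbit f δ x →
    ∃ z ∈ S, Traces f ε z x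

/-- Non-wandering point. -/
def NonWanderingPt [TopologicalSpace X] (f : X → X) (x : X) : Prop :=
  ∀ U ∈ nhds x, ∃ k : ℕ, 1 ≤ k ∧ ∃ y ∈ U, f^[k] y ∈ U

/-- The (forward) orbit of a point. -/
def orbitSet (f : X → X) (x : X) : Set X := Set.range fun n : ℕ => f^[n] x

/-- Recurrent point. -/
def RecurrentPt [TopologicalSpace X] (f : X → X) (x : X) : Prop :=
  ∀ U ∈ nhds x, ∃ k : ℕ, 1 ≤ k ∧ f^[k] x ∈ U

/-- Minimal point: every point of the orbit closure has `x` in its own orbit closure,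
i.e. the orbit closure of `x` is a minimal set. -/
def MinimalPt [TopologicalSpace X] (f : X → X) (x : X) : Prop :=
  ∀ y ∈ closure (orbitSet f x), x ∈ closure (orbitSet f y)

/-- Regularly recurrent point. -/
def RegRecPt [TopologicalSpace X] (f : X → X) (x : X) : Prop :=
  ∀ U ∈ nhds x, ∃ k : ℕ, 1 ≤ k ∧ ∀ n : ℕ, f^[k * n] x ∈ U

/-- Equicontinuity of the family of iterates of `f`. -/
def EquicontinuousMap [MetricSpace X] (f : X → X) : Prop :=
  ∀ ε > (0 : ℝ), ∃ δ > (0 : ℝ), ∀ x y : X, dist x y < δ →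
    ∀ n : ℕ, dist (f^[n] x) (f^[n] y) < ε

/-- `u` is a sensitive point of the subsystem on `S`. -/
def SensitivePtOn [MetricSpace X] (f : X → X) (S : Set X) (u : X) : Prop :=
  ∃ δ > (0 : ℝ), ∀ U ∈ nhds u, ∃ n : ℕ, ∃ a ∈ U ∩ S, ∃ b ∈ U ∩ S,
    dist (f^[n] a) (f^[n] b) > δ

/-- `u` is a sensitive point of `(X,f)`. -/
def SensitivePt [MetricSpace X] (f : X → X) (u : X) : Prop :=
  ∃ δ > (0 : ℝ), ∀ U ∈ nhds u, ∃ n : ℕ, ∃ a ∈ U, ∃ b ∈ U,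
    dist (f^[n] a) (f^[n] b) > δ

/-- Topological transitivity. -/
def TopTransitive {Y : Type*} [TopologicalSpace Y] (g : Y → Y) : Prop :=
  ∀ U V : Set Y, IsOpen U → U.Nonempty → IsOpen V → V.Nonempty →
    ∃ n : ℕ, 1 ≤ n ∧ (g^[n] '' U ∩ V).Nonempty

/-- Weak mixing: the product system is transitive. -/
def WeaklyMixing [TopologicalSpace X] (f : X → X) : Prop :=
  TopTransitive (fun p : X × X => (f p.1, f p.2))

/-- Strong mixing. -/
def StronglyMixing {Y : Type*} [TopologicalSpace Y] (g : Y → Y) : Prop :=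
  ∀ U V : Set Y, IsOpen U → U.Nonempty → IsOpen V → V.Nonempty →
    ∃ N : ℕ, ∀ n ≥ N, (g^[n] '' U ∩ V).Nonempty

/-- The shift map on the full shift over `d` symbols. -/
def shiftMap (d : ℕ) : (ℕ → Fin d) → (ℕ → Fin d) := fun x n => x (n + 1)

/-- `π` is a factor map from the subsystem `(Y, f^[m])` onto the full shift on `d` symbols. -/
def FactorOntoShift [TopologicalSpace X] (f : X → X) (m : ℕ) (Y : Set X) (d : ℕ)
    (π : X → (ℕ → Fin d)) : Prop :=
  ContinuousOn π Y ∧ π '' Y = Set.univ ∧ ∀ y ∈ Y, π (f^[m] y) = shiftMap d (π y)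

/-!
Let `x` be a `δ₁`-pseudo-orbit in `Ω(f)`. A non-wandering point `a` lies on arbitrarily fine
chains from `a` back to itself; going twice around such a cycle and replacing its second point
by a nearby `b` shows that a small step from `a` to `b` can be undone by a `δ`-chain. Hence
`x 0, …, x N` closes up to a periodic `δ`-pseudo-orbit. An accumulation point of the orbit of a
point shadowing it, at multiples of the period, is non-wandering and still traces
`x 0, …, x N`. Since `Ω(f)` is closed, compactness lets `N → ∞`.
-/

open Relation Filter Topology

section Chains

variable {α : Type*} {r : α → α → Prop}

theorem exists_chain_extension_of_reflTransGen {x : ℕ → α} {n : ℕ} {b : α}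
    (hx : ∀ i < n, r (x i) (x (i + 1))) (h : ReflTransGen r (x n) b) :
    ∃ m ≥ n, ∃ y : ℕ → α, (∀ i ≤ n, y i = x i) ∧ y m = b ∧ ∀ i < m, r (y i) (y (i + 1)) := by
  induction h with
  | refl => exact ⟨n, le_rfl, x, fun _ _ => rfl, rfl, hx⟩
  | @tail c d _ hcd ih =>
    obtain ⟨m, hnm, y, hyx, hyc, hy⟩ := ih
    refine ⟨m + 1, by omega, update y (m + 1) d,
      fun i hi => (update_of_ne (by omega) _ _).trans (hyx i hi), update_self .., fun i hi => ?_⟩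
    rw [update_of_ne (by omega)]
    rcases Nat.lt_succ_iff_lt_or_eq.mp hi with hi | rfl
    · rw [update_of_ne (by omega)]
      exact hy i hi
    · rw [update_self, hyc]
      exact hcd

theorem exists_periodic_chain_of_reflTransGen {x : ℕ → α} {n : ℕ} (hn : 0 < n)
    (h : ReflTransGen r (x n) (x 0)) (hx : ∀ i < n, r (x i) (x (i + 1))) :
    ∃ p > 0, ∃ ζ : ℕ → α, (∀ i < n, ζ i = x i) ∧ Periodic ζ p ∧ ∀ i, r (ζ i) (ζ (i + 1)) := by
  obtain ⟨m, hnm, y, hyx, hym, hy⟩ := exists_chain_extension_of_reflTransGen hx h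
  have hm : 0 < m := hn.trans_le hnm
  refine ⟨m, hm, fun i => y (i % m), fun i hi => ?_, fun i => by simp, fun i => ?_⟩
  · simp only [Nat.mod_eq_of_lt (hi.trans_le hnm), hyx i hi.le]
  · show r (y (i % m)) (y ((i + 1) % m))
    rw [← Nat.mod_add_mod]
    have hstep := hy _ (Nat.mod_lt i hm)
    rcases Nat.lt_or_ge (i % m + 1) m with hlt | hge
    · rwa [Nat.mod_eq_of_lt hlt]
    · have heq : i % m + 1 = m := le_antisymm (Nat.mod_lt i hm) hge
      rw [heq] at hstep
      rwa [heq, Nat.mod_self, hyx 0 hn.le, ← hym]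

theorem reflTransGen_zero_of_forall_succ {x : ℕ → α} (h : ∀ n, ReflTransGen r (x (n + 1)) (x n))
    (n : ℕ) : ReflTransGen r (x n) (x 0) := by
  induction n with
  | zero => exact .refl
  | succ n ih => exact (h n).trans ih

end Chains

section PseudoChains

variable [PseudoMetricSpace X] {f : X → X}

/-- `TransGen (PseudoStep f δ) a b` says that a `δ`-chain of positive length leads from `a` to
`b`. -/
def PseudoStep (f : X → X) (δ : ℝ) (u v : X) : Prop :=
  dist (f u) v < δ

theorem reflTransGen_pseudoStep_iterate {δ : ℝ} (hδ : 0 < δ) (y : X) (n : ℕ) :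
    ReflTransGen (PseudoStep f δ) y (f^[n] y) := by
  induction n with
  | zero => exact .refl
  | succ n ih => exact ih.tail (by simpa [PseudoStep, iterate_succ_apply'] using hδ)

theorem Relation.TransGen.pseudoStep_of_dist_apply_add_le {γ δ : ℝ} {a b c : X}
    (h : TransGen (PseudoStep f γ) c a) (hbc : dist (f b) (f c) + γ ≤ δ) :
    TransGen (PseudoStep f δ) b a := by
  obtain ⟨w, hcw, hwa⟩ := TransGen.head'_iff.mp h
  have hγδ : γ ≤ δ := by linarith [dist_nonneg (x := f b) (y := f c)]
  refine .head' ?_ (ReflTransGen.mono (r := PseudoStep f γ)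
    (fun _ _ h => lt_of_lt_of_le h hγδ) _ _ hwa)
  calc dist (f b) w ≤ dist (f b) (f c) + dist (f c) w := dist_triangle _ _ _
    _ < δ := by unfold PseudoStep at hcw; linarith

theorem transGen_pseudoStep_self_of_nonWanderingPt {a : X} {γ : ℝ} (hfa : ContinuousAt f a)
    (ha : NonWanderingPt f a) (hγ : 0 < γ) : TransGen (PseudoStep f γ) a a := by
  obtain ⟨ρ, hρ, hfρ⟩ := Metric.continuousAt_iff.mp hfa (γ / 2) (half_pos hγ)
  obtain ⟨k, hk, y, hy, hky⟩ :=
    ha (Metric.ball a (min ρ (γ / 2))) (Metric.ball_mem_nhds _ (by positivity))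
  obtain ⟨j, rfl⟩ : ∃ j, k = j + 1 := ⟨k - 1, by omega⟩
  rw [Metric.mem_ball, lt_min_iff] at hy hky
  have hya : TransGen (PseudoStep f (γ / 2)) y a :=
    .tail' (reflTransGen_pseudoStep_iterate (half_pos hγ) y j)
      (by simpa [PseudoStep, iterate_succ_apply'] using hky.2)
  refine hya.pseudoStep_of_dist_apply_add_le ?_
  linarith [dist_comm (f a) (f y), hfρ hy.1]

theorem exists_transGen_pseudoStep_of_nonWanderingPt (hf : UniformContinuous f) {δ : ℝ}
    (hδ : 0 < δ) : ∃ δ₁ > 0, δ₁ ≤ δ ∧ ∀ a b, NonWanderingPt f a → PseudoStep f δ₁ a b →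
      TransGen (PseudoStep f δ) b a := by
  obtain ⟨ρ, hρ, hfρ⟩ := Metric.uniformContinuous_iff.mp hf (δ / 2) (half_pos hδ)
  refine ⟨min δ (ρ / 2), by positivity, min_le_left _ _, fun a b ha hab => ?_⟩
  have hγ : 0 < min (δ / 2) (ρ / 2) := by positivity
  -- go around the cycle twice, so that its second point `w` is followed by a full chain to `a`
  have hcycle := transGen_pseudoStep_self_of_nonWanderingPt hf.continuous.continuousAt ha hγ
  obtain ⟨w, haw, hwa⟩ := TransGen.head'_iff.mp hcycle
  have hbw : dist b w < ρ := by
    unfold PseudoStep at hab haw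
    rw [lt_min_iff] at hab haw
    linarith [dist_triangle b (f a) w, dist_comm b (f a)]
  refine (TransGen.trans_right hwa hcycle).pseudoStep_of_dist_apply_add_le ?_
  linarith [hfρ hbw, min_le_left (δ / 2) (ρ / 2)]

end PseudoChains

section NonWandering

variable {f : X → X}

theorem isClosed_setOf_nonWanderingPt [TopologicalSpace X] (f : X → X) :
    IsClosed {x | NonWanderingPt f x} := by
  refine isClosed_of_closure_subset fun x hx U hU => ?_
  obtain ⟨V, hVU, hV, hxV⟩ := mem_nhds_iff.mp hU
  obtain ⟨y, hyV, hy⟩ := mem_closure_iff.mp hx V hV hxV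
  obtain ⟨k, hk, z, hzV, hkz⟩ := hy V (hV.mem_nhds hyV)
  exact ⟨k, hk, z, hVU hzV, hVU hkz⟩

theorem nonWanderingPt_of_tendsto_iterate [TopologicalSpace X] {z u : X} {φ : ℕ → ℕ}
    (hφ : StrictMono φ) (h : Tendsto (fun j => f^[φ j] z) atTop (𝓝 u)) :
    NonWanderingPt f u := by
  intro U hU
  obtain ⟨M, hM⟩ := eventually_atTop.mp (h.eventually_mem hU)
  have hlt : φ M < φ (M + 1) := hφ M.lt_succ_self
  refine ⟨φ (M + 1) - φ M, by omega, f^[φ M] z, hM M le_rfl, ?_⟩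
  rw [← iterate_add_apply, Nat.sub_add_cancel hlt.le]
  exact hM (M + 1) M.le_succ

variable [MetricSpace X] [CompactSpace X]

theorem exists_nonWanderingPt_dist_iterate_le_of_traces (hf : Continuous f) {ε : ℝ} {p : ℕ}
    {z : X} {ζ : ℕ → X} (hp : 0 < p) (hζ : Periodic ζ p) (hz : Traces f ε z ζ) :
    ∃ u, NonWanderingPt f u ∧ ∀ n, dist (f^[n] u) (ζ n) ≤ ε := by
  obtain ⟨u, -, φ, hφ, hu⟩ := isCompact_univ.tendsto_subseq fun j => mem_univ (f^[j * p] z)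
  refine ⟨u, nonWanderingPt_of_tendsto_iterate (hφ.mul_const hp) hu, fun n => ?_⟩
  refine le_of_tendsto ((((hf.iterate n).tendsto u).comp hu).dist tendsto_const_nhds)
    (Eventually.of_forall fun j => ?_)
  have hzj := hz (n + φ j * p)
  have hperiod : ζ (n + φ j * p) = ζ n := by simpa using hζ.nat_mul (φ j) n
  rw [iterate_add_apply, hperiod] at hzj
  exact hzj.le

theorem exists_mem_dist_iterate_le_of_forall_le (hf : Continuous f) {S : Set X}
    (hS : IsClosed S) {x : ℕ → X} {ε : ℝ}
    (h : ∀ N, ∃ u ∈ S, ∀ i ≤ N, dist (f^[i] u) (x i) ≤ ε) :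
    ∃ u ∈ S, ∀ i, dist (f^[i] u) (x i) ≤ ε := by
  let t : ℕ → Set X := fun N => {u | u ∈ S ∧ ∀ i ≤ N, dist (f^[i] u) (x i) ≤ ε}
  have hclosed : ∀ N, IsClosed (t N) := fun N => by
    simp only [t, ofPred_and, ofPred_mem_eq, ofPred_forall]
    exact hS.inter <| isClosed_iInter fun i => isClosed_iInter fun _ =>
      isClosed_le ((hf.iterate i).dist continuous_const) continuous_const
  obtain ⟨u, hu⟩ := IsCompact.nonempty_iInter_of_sequence_nonempty_isCompact_isClosed t
    (fun N u hu => ⟨hu.1, fun i hi => hu.2 i (by omega)⟩) h (hclosed 0).isCompact hclosed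
  rw [mem_iInter] at hu
  exact ⟨u, (hu 0).1, fun i => (hu i).2 i le_rfl⟩

end NonWandering

theorem shadowing_restricts_to_nonwandering [MetricSpace X] [CompactSpace X]
    (f : X → X) (hf : Continuous f) (hsh : HasShadowing f) :
    HasShadowingOn f {x : X | NonWanderingPt f x} := by
  intro ε hε
  obtain ⟨δ, hδ, hshadow⟩ := hsh (ε / 2) (half_pos hε)
  obtain ⟨δ₁, hδ₁, hδ₁δ, hback⟩ := exists_transGen_pseudoStep_of_nonWanderingPt
    (CompactSpace.uniformContinuous_of_continuous hf) hδ
  refine ⟨δ₁, hδ₁, fun x hxΩ hx => ?_⟩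
  have hupto : ∀ N, ∃ u ∈ {x : X | NonWanderingPt f x},
      ∀ i ≤ N, dist (f^[i] u) (x i) ≤ ε / 2 := by
    intro N
    have hloop : ReflTransGen (PseudoStep f δ) (x (N + 1)) (x 0) :=
      reflTransGen_zero_of_forall_succ (fun n => (hback _ _ (hxΩ n) (hx n)).to_reflTransGen) _
    obtain ⟨p, hp, ζ, hζx, hζp, hζ⟩ :=
      exists_periodic_chain_of_reflTransGen N.succ_pos hloop fun i _ => (hx i).trans_le hδ₁δ
    obtain ⟨z, hz⟩ := hshadow ζ hζ
    obtain ⟨u, hu, hud⟩ := exists_nonWanderingPt_dist_iterate_le_of_traces hf hp hζp hz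
    exact ⟨u, hu, fun i hi => hζx i (Nat.lt_succ_of_le hi) ▸ hud i⟩
  obtain ⟨w, hw, hwx⟩ :=
    exists_mem_dist_iterate_le_of_forall_le hf (isClosed_setOf_nonWanderingPt f) hupto
  exact ⟨w, hw, fun n => (hwx n).trans_lt (half_lt_self hε)⟩
end

section
/- If (X,f) is a non-wandering dynamical system with the shadowing property, then the set of minimal points of f is dense in X. -/
open Set Function

variable {X : Type*}

/-!
Near any point `x`, non-wandering gives a point `y` and a return time `k` with `f^[k] y` close
to `y`, so the `k`-periodic sequence `n ↦ f^[n % k] y` is a pseudo-orbit. A shadowing point `z`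
then has its whole `f^[k]`-orbit, hence its `f^[k]`-orbit closure, close to `y`. By Zorn's lemma
this orbit closure contains a minimal point of `f^[k]`, and minimal points of `f^[k]` are minimal
points of `f`, because the `f`-orbit closure is the union of `k` images of the `f^[k]`-orbit
closure.
-/

section OrbitSet

variable {g : X → X}

lemma orbitSet_subset_of_mapsTo {S : Set X} (hS : MapsTo g S S) {x : X} (hx : x ∈ S) :
    orbitSet g x ⊆ S :=
  range_subset_iff.2 fun n => hS.iterate n hx

lemma mapsTo_orbitSet (x : X) : MapsTo g (orbitSet g x) (orbitSet g x) := by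
  rintro _ ⟨n, rfl⟩
  exact ⟨n + 1, iterate_succ_apply' g n x⟩

lemma orbitSet_iterate_apply_subset (x : X) (n : ℕ) : orbitSet g (g^[n] x) ⊆ orbitSet g x :=
  orbitSet_subset_of_mapsTo (mapsTo_orbitSet x) ⟨n, rfl⟩

lemma orbitSet_iterate_subset (x : X) (k : ℕ) : orbitSet (g^[k]) x ⊆ orbitSet g x := by
  rintro _ ⟨q, rfl⟩
  exact ⟨k * q, congrFun (iterate_mul g k q) x⟩

lemma orbitSet_subset_biUnion_image_iterate {k : ℕ} (hk : 0 < k) (x : X) :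
    orbitSet g x ⊆ ⋃ j ∈ Finset.range k, g^[j] '' orbitSet (g^[k]) x := by
  rintro _ ⟨n, rfl⟩
  refine mem_biUnion (Finset.mem_range.2 (Nat.mod_lt n hk)) ⟨_, ⟨n / k, rfl⟩, ?_⟩
  show g^[n % k] ((g^[k])^[n / k] x) = g^[n] x
  rw [← iterate_mul, ← iterate_add_apply, Nat.mod_add_div]

lemma mapsTo_closure_orbitSet [TopologicalSpace X] (hg : Continuous g) (x : X) :
    MapsTo g (closure (orbitSet g x)) (closure (orbitSet g x)) :=
  (mapsTo_orbitSet x).closure hg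

end OrbitSet

section MinimalPoints

variable [TopologicalSpace X] {g : X → X}

lemma exists_minimal_nonempty_closed_invariant_subset [CompactSpace X] {T : Set X}
    (hT : IsClosed T) (hne : T.Nonempty) (hinv : MapsTo g T T) :
    ∃ M ⊆ T, Minimal (fun A : Set X => A.Nonempty ∧ IsClosed A ∧ MapsTo g A A) M := by
  refine zorn_superset_nonempty _ (fun c hcS hc hcne => ?_) T ⟨hne, hT, hinv⟩
  have : Nonempty c := hcne.to_subtype
  refine ⟨⋂₀ c, ⟨?_, ?_, ?_⟩, fun s hs => sInter_subset_of_mem hs⟩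
  · exact IsCompact.nonempty_sInter_of_directed_nonempty_isCompact_isClosed
      (IsChain.directedOn (r := fun A B : Set X => B ⊆ A) hc.symm)
      (fun A hA => (hcS hA).1) (fun A hA => (hcS hA).2.1.isCompact) (fun A hA => (hcS hA).2.1)
  · exact isClosed_sInter fun A hA => (hcS hA).2.1
  · exact fun x hx => mem_sInter.2 fun A hA => (hcS hA).2.2 (hx A hA)

lemma Minimal.minimalPt_of_mem (hg : Continuous g) {M : Set X}
    (hM : Minimal (fun A : Set X => A.Nonempty ∧ IsClosed A ∧ MapsTo g A A) M)
    {x : X} (hx : x ∈ M) : MinimalPt g x := by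
  have closure_orbitSet_eq (w : X) (hw : w ∈ M) : closure (orbitSet g w) = M :=
    hM.eq_of_subset (t := closure (orbitSet g w))
      ⟨⟨w, subset_closure ⟨0, rfl⟩⟩, isClosed_closure, mapsTo_closure_orbitSet hg w⟩
      (closure_minimal (orbitSet_subset_of_mapsTo hM.prop.2.2 hw) hM.prop.2.1)
  intro y hy
  rw [closure_orbitSet_eq x hx] at hy
  rwa [closure_orbitSet_eq y hy]

lemma exists_minimalPt_mem_closure_orbitSet [CompactSpace X] (hg : Continuous g) (x : X) :
    ∃ m ∈ closure (orbitSet g x), MinimalPt g m := by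
  obtain ⟨M, hMT, hM⟩ := exists_minimal_nonempty_closed_invariant_subset
    (T := closure (orbitSet g x)) isClosed_closure ⟨x, subset_closure ⟨0, rfl⟩⟩
    (mapsTo_closure_orbitSet hg x)
  obtain ⟨m, hm⟩ := hM.prop.1
  exact ⟨m, hMT hm, hM.minimalPt_of_mem hg hm⟩

lemma MinimalPt.of_iterate [T2Space X] [CompactSpace X] (hg : Continuous g) {k : ℕ}
    (hk : 0 < k) {m : X} (hm : MinimalPt (g^[k]) m) : MinimalPt g m := by
  have hcover : closure (orbitSet g m) ⊆
      ⋃ j ∈ Finset.range k, g^[j] '' closure (orbitSet (g^[k]) m) :=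
    closure_minimal
      ((orbitSet_subset_biUnion_image_iterate hk m).trans
        (biUnion_mono subset_rfl fun j _ => image_mono subset_closure))
      (isClosed_biUnion_finset fun j _ =>
        (isClosed_closure.isCompact.image (hg.iterate j)).isClosed)
  intro y hy
  obtain ⟨j, hj, w, hw, rfl⟩ :
      ∃ j < k, ∃ w ∈ closure (orbitSet (g^[k]) m), g^[j] w = y := by
    simpa using hcover hy
  have hgw : g^[k] w = g^[k - j] (g^[j] w) := by
    rw [← iterate_add_apply, Nat.sub_add_cancel hj.le]
  have hm' : m ∈ closure (orbitSet (g^[k]) (g^[k] w)) :=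
    hm _ (mapsTo_closure_orbitSet (hg.iterate k) m hw)
  refine closure_mono ?_ hm'
  rw [hgw]
  exact (orbitSet_iterate_subset _ k).trans (orbitSet_iterate_apply_subset _ _)

end MinimalPoints

section Shadowing

variable [MetricSpace X] {f : X → X}

lemma isPseudoOrbit_iterate_mod {k : ℕ} (hk : 0 < k) {δ : ℝ} (hδ : 0 < δ) {y : X}
    (hy : dist (f^[k] y) y < δ) : IsPseudoOrbit f δ (fun n => f^[n % k] y) := by
  intro n
  dsimp only
  rw [← Nat.mod_add_mod n k 1, ← iterate_succ_apply' f]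
  rcases Nat.lt_or_eq_of_le (Nat.mod_lt n hk : n % k < k) with hlt | heq
  · rw [Nat.mod_eq_of_lt hlt, dist_self]
    exact hδ
  · rwa [heq, show n % k + 1 = k from heq, Nat.mod_self, iterate_zero_apply]

lemma exists_minimalPt_near_of_traces_periodic [CompactSpace X] (hf : Continuous f) {k : ℕ}
    (hk : 0 < k) {p : ℕ → X} (hp : Periodic p k) {ε : ℝ} {z : X} (hz : Traces f ε z p) :
    ∃ m, MinimalPt f m ∧ dist m (p 0) ≤ ε := by
  obtain ⟨m, hmz, hm⟩ := exists_minimalPt_mem_closure_orbitSet (hf.iterate k) z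
  refine ⟨m, hm.of_iterate hf hk, ?_⟩
  have horbit : orbitSet (f^[k]) z ⊆ Metric.closedBall (p 0) ε := by
    rintro _ ⟨q, rfl⟩
    show dist ((f^[k])^[q] z) (p 0) ≤ ε
    rw [← iterate_mul, ← hp.nat_mul_eq q, Nat.cast_id, mul_comm]
    exact (hz _).le
  exact closure_minimal horbit Metric.isClosed_closedBall hmz

end Shadowing

theorem dense_minimal_points [MetricSpace X] [CompactSpace X]
    (f : X → X) (hf : Continuous f) (hnw : ∀ x : X, NonWanderingPt f x)
    (hsh : HasShadowing f) :
    Dense {x : X | MinimalPt f x} := by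
  rw [Metric.dense_iff]
  intro x r hr
  obtain ⟨δ, hδ, hshadow⟩ := hsh (r / 2) (by positivity)
  obtain ⟨k, hk, y, hy, hky⟩ :=
    hnw x (Metric.ball x (min δ r / 2)) (Metric.ball_mem_nhds x (by positivity))
  rw [Metric.mem_ball] at hy hky
  have hreturn : dist (f^[k] y) y < δ := by
    linarith [dist_triangle_right (f^[k] y) y x, min_le_left δ r]
  obtain ⟨z, hz⟩ := hshadow _ (isPseudoOrbit_iterate_mod hk hδ hreturn)
  obtain ⟨m, hm, hmy⟩ := exists_minimalPt_near_of_traces_periodic hf hk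
    (fun n => by simp only [Nat.add_mod_right]) hz
  refine ⟨m, ?_, hm⟩
  rw [Metric.mem_ball]
  simp only [Nat.zero_mod, iterate_zero_apply] at hmy
  linarith [dist_triangle m y x, min_le_right δ r]
end

section
/- Let (X,f) be a non-wandering equicontinuous dynamical system. Then every point of X is minimal, i.e., X is a union of minimal sets. -/
open Set Function

variable {X : Type*}

/-! Nonwandering points of an equicontinuous map are recurrent: a nearby point `y` that returns
close to itself drags the orbit of `x` along with it. An equicontinuous map then returns close to
a recurrent point `x` at arbitrarily late times, and following the orbit of a point `y` close to
`f^[m] x` shows that `x` lies in the orbit closure of `y`. -/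

section Equicontinuous

variable [MetricSpace X] {f : X → X}

theorem EquicontinuousMap.recurrentPt_of_nonWanderingPt (heq : EquicontinuousMap f) {x : X}
    (hx : NonWanderingPt f x) : RecurrentPt f x := by
  intro U hU
  obtain ⟨ε, hε, hεU⟩ := Metric.mem_nhds_iff.mp hU
  obtain ⟨δ, hδ, hδε⟩ := heq (ε / 2) (half_pos hε)
  obtain ⟨k, hk, y, hy, hky⟩ :=
    hx _ (Metric.ball_mem_nhds x (lt_min hδ (half_pos hε) : 0 < min δ (ε / 2)))
  rw [Metric.mem_ball, lt_min_iff] at hy hky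
  refine ⟨k, hk, hεU ?_⟩
  have hxy : dist (f^[k] x) (f^[k] y) < ε / 2 := hδε x y (by rw [dist_comm]; exact hy.1) k
  calc dist (f^[k] x) x ≤ dist (f^[k] x) (f^[k] y) + dist (f^[k] y) x := dist_triangle _ _ _
    _ < ε / 2 + ε / 2 := add_lt_add hxy hky.2
    _ = ε := add_halves ε

theorem EquicontinuousMap.exists_ge_dist_iterate_lt_of_recurrentPt (heq : EquicontinuousMap f)
    {x : X} (hx : RecurrentPt f x) (N : ℕ) {ε : ℝ} (hε : 0 < ε) :
    ∃ n, N ≤ n ∧ dist (f^[n] x) x < ε := by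
  induction N generalizing ε with
  | zero =>
    obtain ⟨k, -, hk⟩ := hx _ (Metric.ball_mem_nhds x hε)
    exact ⟨k, k.zero_le, hk⟩
  | succ N ih =>
    -- if `f^[n] x` is very close to `x`, then `f^[k + n] x` stays close to `f^[k] x`
    obtain ⟨δ, hδ, hδε⟩ := heq (ε / 2) (half_pos hε)
    obtain ⟨n, hNn, hn⟩ := ih (lt_min hδ (half_pos hε) : 0 < min δ (ε / 2))
    obtain ⟨k, hk, hkx⟩ := hx _ (Metric.ball_mem_nhds x (half_pos hε))
    rw [lt_min_iff] at hn
    refine ⟨k + n, by omega, ?_⟩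
    rw [iterate_add_apply]
    calc dist (f^[k] (f^[n] x)) x ≤ dist (f^[k] (f^[n] x)) (f^[k] x) + dist (f^[k] x) x :=
          dist_triangle _ _ _
      _ < ε / 2 + ε / 2 := add_lt_add (hδε _ _ hn.1 k) hkx
      _ = ε := add_halves ε

theorem EquicontinuousMap.minimalPt_of_recurrentPt (heq : EquicontinuousMap f) {x : X}
    (hx : RecurrentPt f x) : MinimalPt f x := by
  intro y hy
  rw [Metric.mem_closure_iff] at hy ⊢
  intro ε hε
  obtain ⟨δ, hδ, hδε⟩ := heq (ε / 2) (half_pos hε)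
  obtain ⟨_, ⟨m, rfl⟩, hxy⟩ := hy δ hδ
  obtain ⟨n, hmn, hn⟩ := heq.exists_ge_dist_iterate_lt_of_recurrentPt hx m (half_pos hε)
  refine ⟨f^[n - m] y, ⟨n - m, rfl⟩, ?_⟩
  have hny : dist (f^[n - m] y) (f^[n] x) < ε / 2 := by
    simpa only [← iterate_add_apply, Nat.sub_add_cancel hmn] using hδε _ _ hxy (n - m)
  calc dist x (f^[n - m] y) ≤ dist x (f^[n] x) + dist (f^[n - m] y) (f^[n] x) :=
        dist_triangle_right _ _ _
    _ < ε / 2 + ε / 2 := add_lt_add (by rwa [dist_comm]) hny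
    _ = ε := add_halves ε

end Equicontinuous

theorem nonwandering_equicontinuous_all_minimal_general [MetricSpace X]
    (f : X → X) (hnw : ∀ x : X, NonWanderingPt f x)
    (heq : EquicontinuousMap f) :
    ∀ x : X, MinimalPt f x :=
  fun x => heq.minimalPt_of_recurrentPt (heq.recurrentPt_of_nonWanderingPt (hnw x))

theorem nonwandering_equicontinuous_all_minimal [MetricSpace X] [CompactSpace X]
    (f : X → X) (hf : Continuous f) (hnw : ∀ x : X, NonWanderingPt f x)
    (heq : EquicontinuousMap f) :
    ∀ x : X, MinimalPt f x :=
  nonwandering_equicontinuous_all_minimal_general f hnw heq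
end

section
/- Let (X,f) be a dynamical system with the shadowing property and let u ∈ X be a sensitive point of the subsystem (Ω(f), f). Then for every neighborhood U of u there exist a positive integer m, a closed f^m-invariant subset Y ⊆ U, and a factor map π : (Y, f^m) → ({0,1}^ℕ, σ) onto the full shift on two symbols. -/
open Set Function

variable {X : Type*}

section HorseshoeAux

variable {X : Type*}

/-- Uniform continuity modulus on a compact metric space. -/
lemma exists_modulus [MetricSpace X] [CompactSpace X] (f : X → X) (hf : Continuous f)
    (γ : ℝ) (hγ : 0 < γ) :
    ∃ η > (0:ℝ), ∀ p q : X, dist p q < η → dist (f p) (f q) < γ := by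
  obtain ⟨η, hη, h⟩ := Metric.uniformContinuous_iff.mp
    (CompactSpace.uniformContinuous_of_continuous hf) γ hγ
  exact ⟨η, hη, fun p q hpq => h hpq⟩

/-- A nonwandering point admits γ-chains from itself to itself. -/
lemma loop_chain [MetricSpace X] [CompactSpace X] (f : X → X) (hf : Continuous f)
    (c : X) (hc : NonWanderingPt f c) (γ : ℝ) (hγ : 0 < γ) :
    ∃ l : ℕ, 1 ≤ l ∧ ∃ z : ℕ → X, z 0 = c ∧ z l = c ∧
      ∀ i < l, dist (f (z i)) (z (i + 1)) < γ := by
  obtain ⟨η, hη, hmod⟩ := exists_modulus f hf (γ/2) (by linarith)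
  set α := min η (γ/2) with hα
  have hα0 : 0 < α := lt_min hη (by linarith)
  obtain ⟨k, hk1, y, hy, hky⟩ := hc (Metric.ball c α) (Metric.ball_mem_nhds c hα0)
  have hyc : dist y c < α := Metric.mem_ball.mp hy
  have hkyc : dist (f^[k] y) c < α := Metric.mem_ball.mp hky
  have hfcy : dist (f c) (f y) < γ/2 :=
    hmod _ _ (by rw [dist_comm]; exact lt_of_lt_of_le hyc (min_le_left _ _))
  set w : ℕ → X := fun i => if i = 0 ∨ k ≤ i then c else f^[i] y with hw
  have hw0 : w 0 = c := by simp [hw]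
  have hwk : ∀ j, k ≤ j → w j = c := by intro j hj; simp [hw, hj]
  have hwm : ∀ j, j ≠ 0 → j < k → w j = f^[j] y := by
    intro j h1 h2; simp [hw, h1, Nat.not_le.mpr h2]
  refine ⟨k, hk1, w, hw0, hwk k le_rfl, ?_⟩
  intro i hi
  rcases Nat.eq_zero_or_pos i with h0 | hpos
  · subst h0
    rcases eq_or_lt_of_le hk1 with hk | hk
    · -- k = 1
      rw [hw0, hwk 1 (by omega)]
      have hfy1 : f^[k] y = f y := by rw [← hk]; simp
      calc dist (f c) c ≤ dist (f c) (f y) + dist (f y) c := dist_triangle _ _ _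
        _ < γ/2 + γ/2 := by
              refine add_lt_add hfcy ?_
              rw [← hfy1]
              exact lt_of_lt_of_le hkyc (min_le_right _ _)
        _ = γ := by ring
    · rw [hw0, hwm 1 (by omega) (by omega)]
      simpa using lt_of_lt_of_le hfcy (by linarith)
  · rw [hwm i (by omega) hi]
    rcases eq_or_lt_of_le (Nat.succ_le_of_lt hi) with hik | hik
    · rw [hwk (i+1) (by omega)]
      rw [← Function.iterate_succ_apply' f i y, hik]
      exact lt_of_lt_of_le hkyc (le_trans (min_le_right _ _) (by linarith))
    · rw [hwm (i+1) (by omega) hik]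
      rw [← Function.iterate_succ_apply' f i y, dist_self]
      exact hγ

/-- A nonwandering point admits γ-chains from any of its iterates back to itself. -/
lemma chain_from_iterate [MetricSpace X] [CompactSpace X] (f : X → X) (hf : Continuous f)
    (c : X) (hc : NonWanderingPt f c) :
    ∀ (n : ℕ) (γ : ℝ), 0 < γ → ∃ l : ℕ, 1 ≤ l ∧ ∃ z : ℕ → X,
      z 0 = f^[n] c ∧ z l = c ∧ ∀ i < l, dist (f (z i)) (z (i + 1)) < γ := by
  intro n
  induction n with
  | zero => intro γ hγ; simpa using loop_chain f hf c hc γ hγ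
  | succ n ih =>
    intro γ hγ
    obtain ⟨η, hη, hmod⟩ := exists_modulus f hf (γ/2) (by linarith)
    obtain ⟨l, hl1, z, hz0, hzl, hzj⟩ := ih (min η (γ/2)) (lt_min hη (by linarith))
    have hβη : min η (γ/2) ≤ η := min_le_left _ _
    have hβγ : min η (γ/2) ≤ γ/2 := min_le_right _ _
    have hz01 : dist (f^[n+1] c) (z 1) < min η (γ/2) := by
      have h := hzj 0 (by omega)
      rw [hz0] at h
      rwa [Function.iterate_succ_apply' f n c]
    rcases eq_or_lt_of_le hl1 with hl | hl
    · -- l = 1 : splice in a base loop at c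
      obtain ⟨k, hk1, v, hv0, hvk, hvj⟩ := loop_chain f hf c hc (γ/2) (by linarith)
      set w : ℕ → X := fun i => if i = 0 then f^[n+1] c else v i with hw
      have hw0 : w 0 = f^[n+1] c := by simp [hw]
      have hwp : ∀ j, j ≠ 0 → w j = v j := by intro j hj; simp [hw, hj]
      refine ⟨k, hk1, w, hw0, ?_, ?_⟩
      · rw [hwp k (by omega)]; exact hvk
      · intro i hi
        rcases Nat.eq_zero_or_pos i with h0 | hpos
        · subst h0
          rw [hw0, hwp 1 (by omega)]
          have h1cl : dist (f^[n+1] c) c < η := by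
            have hz1c : z 1 = c := by rw [← hl] at hzl; exact hzl
            rw [hz1c] at hz01; exact lt_of_lt_of_le hz01 hβη
          have h1 : dist (f (f^[n+1] c)) (f c) < γ/2 := hmod _ _ h1cl
          have hv1 := hvj 0 (by omega)
          rw [hv0] at hv1
          calc dist (f (f^[n+1] c)) (v (0+1))
              ≤ dist (f (f^[n+1] c)) (f c) + dist (f c) (v (0+1)) := dist_triangle _ _ _
            _ < γ/2 + γ/2 := add_lt_add h1 hv1
            _ = γ := by ring
        · rw [hwp i (by omega), hwp (i+1) (by omega)]
          exact (hvj i hi).trans_le (by linarith)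
    · -- l ≥ 2 : drop the first point
      set w : ℕ → X := fun i => if i = 0 then f^[n+1] c else z (i+1) with hw
      have hw0 : w 0 = f^[n+1] c := by simp [hw]
      have hwp : ∀ j, j ≠ 0 → w j = z (j+1) := by intro j hj; simp [hw, hj]
      refine ⟨l - 1, by omega, w, hw0, ?_, ?_⟩
      · rw [hwp (l-1) (by omega)]
        have hll : l - 1 + 1 = l := by omega
        rw [hll]; exact hzl
      · intro i hi
        rcases Nat.eq_zero_or_pos i with h0 | hpos
        · subst h0
          rw [hw0, hwp 1 (by omega)]
          have h1 : dist (f (f^[n+1] c)) (f (z 1)) < γ/2 :=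
            hmod _ _ (lt_of_lt_of_le hz01 hβη)
          have h2 := hzj 1 (by omega)
          calc dist (f (f^[n+1] c)) (z (1+1))
              ≤ dist (f (f^[n+1] c)) (f (z 1)) + dist (f (z 1)) (z (1+1)) :=
                dist_triangle _ _ _
            _ < γ/2 + γ/2 := add_lt_add h1 (lt_of_lt_of_le h2 hβγ)
            _ = γ := by ring
        · rw [hwp i (by omega), hwp (i+1) (by omega)]
          exact (hzj (i+1) (by omega)).trans_le (by linarith)

/-- From a chain from `f^[n] c` back to `c`, build an `(n+l)`-periodic pseudo-orbit
through `c` whose first `n+1` entries follow the true orbit of `c`. -/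
lemma block_seq [MetricSpace X] (f : X → X) (c : X) (n l : ℕ) (hl : 1 ≤ l)
    (z : ℕ → X) (hz0 : z 0 = f^[n] c) (hzl : z l = c) (γ : ℝ)
    (hzj : ∀ i < l, dist (f (z i)) (z (i + 1)) < γ) :
    ∃ C : ℕ → X, C 0 = c ∧ C n = f^[n] c ∧ (∀ i, C i = C (i % (n + l))) ∧
      (∀ i, dist (f (C i)) (C (i + 1)) < γ) := by
  have hγ : 0 < γ := lt_of_le_of_lt dist_nonneg (hzj 0 hl)
  set p := n + l with hp
  have hp0 : 0 < p := by omega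
  set blk : ℕ → X := fun j => if j ≤ n then f^[j] c else z (j - n) with hblk
  have hblk0 : blk 0 = c := by simp [hblk]
  have hblkn : blk n = f^[n] c := by simp [hblk]
  have hblkz : ∀ r, n ≤ r → blk r = z (r - n) := by
    intro r hr
    rcases eq_or_lt_of_le hr with h | h
    · subst h; simp [hblk, hz0]
    · simp [hblk, Nat.not_le.mpr h, le_of_lt h]
  have key : ∀ r < p, dist (f (blk r)) (blk ((r+1) % p)) < γ := by
    intro r hr
    rcases Nat.lt_or_ge (r+1) p with h1 | h1
    · rw [Nat.mod_eq_of_lt h1]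
      rcases Nat.lt_or_ge r n with h2 | h2
      · have hb1 : blk r = f^[r] c := by
          simp only [hblk]; rw [if_pos (show r ≤ n from le_of_lt h2)]
        have hb2 : blk (r+1) = f^[r+1] c := by
          simp only [hblk]; rw [if_pos (show r + 1 ≤ n from h2)]
        rw [hb1, hb2, ← Function.iterate_succ_apply' f r c, dist_self]
        exact hγ
      · have hb1 : blk r = z (r - n) := hblkz r h2
        have hb2 : blk (r+1) = z (r - n + 1) := by
          rw [hblkz (r+1) (by omega)]; congr 1; omega
        rw [hb1, hb2]
        exact hzj (r - n) (by omega)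
    · have hrp : r + 1 = p := by omega
      have h0 : (r+1) % p = 0 := by rw [hrp, Nat.mod_self]
      rw [h0, hblk0, hblkz r (by omega)]
      have hc' : c = z ((r - n) + 1) := by rw [← hzl]; congr 1; omega
      rw [hc']
      exact hzj (r - n) (by omega)
  refine ⟨fun i => blk (i % p), by simpa [Nat.zero_mod] using hblk0,
    by show blk (n % p) = _; rw [Nat.mod_eq_of_lt (show n < p by omega)]; exact hblkn,
    fun i => by show blk (i % p) = blk (i % p % p)
                rw [Nat.mod_mod_of_dvd i (dvd_refl p)], fun i => ?_⟩
  have hmm : (i + 1) % p = (i % p + 1) % p := by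
    conv_lhs => rw [Nat.add_mod]
    conv_rhs => rw [Nat.add_mod, Nat.mod_mod_of_dvd i (dvd_refl p)]
  show dist (f (blk (i % p))) (blk ((i + 1) % p)) < γ
  rw [hmm]
  exact key (i % p) (Nat.mod_lt i hp0)

end HorseshoeAux

theorem full_shift_factor_near_sensitive_point [MetricSpace X] [CompactSpace X]
    (f : X → X) (hf : Continuous f) (hsh : HasShadowing f)
    (u : X) (hu : SensitivePtOn f {x : X | NonWanderingPt f x} u)
    (U : Set X) (hU : U ∈ nhds u) :
    ∃ m : ℕ, 1 ≤ m ∧ ∃ Y : Set X, IsClosed Y ∧ Y ⊆ U ∧ Set.MapsTo f^[m] Y Y ∧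
      ∃ π : X → (ℕ → Fin 2), FactorOntoShift f m Y 2 π := by
  classical
  obtain ⟨δ, hδ, hsen⟩ := hu
  obtain ⟨r, hr, hrU⟩ := Metric.mem_nhds_iff.mp hU
  set ε := min (δ/8) (r/4) with hεdef
  have hε : 0 < ε := lt_min (by linarith) (by linarith)
  have hεδ : ε ≤ δ/8 := min_le_left _ _
  have hεr : ε ≤ r/4 := min_le_right _ _
  obtain ⟨δ₀, hδ₀, htrace⟩ := hsh ε hε
  set ρ := min (δ₀/4) (r/4) with hρdef
  have hρ : 0 < ρ := lt_min (by linarith) (by linarith)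
  have hρδ : ρ ≤ δ₀/4 := min_le_left _ _
  have hρr : ρ ≤ r/4 := min_le_right _ _
  obtain ⟨n, a, ha, b, hb, hab⟩ := hsen (Metric.ball u ρ) (Metric.ball_mem_nhds u hρ)
  have hau : dist a u < ρ := Metric.mem_ball.mp ha.1
  have hbu : dist b u < ρ := Metric.mem_ball.mp hb.1
  have haΩ : NonWanderingPt f a := ha.2
  have hbΩ : NonWanderingPt f b := hb.2
  obtain ⟨lA, hlA, zA, hzA0, hzAl, hzAj⟩ :=
    chain_from_iterate f hf a haΩ n (δ₀/4) (by linarith)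
  obtain ⟨lB, hlB, zB, hzB0, hzBl, hzBj⟩ :=
    chain_from_iterate f hf b hbΩ n (δ₀/4) (by linarith)
  obtain ⟨A, hA0, hAn, hAmod, hAj⟩ := block_seq f a n lA hlA zA hzA0 hzAl _ hzAj
  obtain ⟨B, hB0, hBn, hBmod, hBj⟩ := block_seq f b n lB hlB zB hzB0 hzBl _ hzBj
  set pa := n + lA with hpa
  set pb := n + lB with hpb
  set m := pa * pb with hm
  have hm0 : 0 < m := by
    have h1 : 0 < pa := by omega
    have h2 : 0 < pb := by omega
    rw [hm]; exact Nat.mul_pos h1 h2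
  have hnm : n < m := by
    have h1 : n < pa := by omega
    have h2 : pa ≤ pa * pb := Nat.le_mul_of_pos_right pa (by omega)
    rw [hm]; omega
  have hAm : A m = a := by
    rw [hAmod m]
    have : m % pa = 0 := by rw [hm]; exact Nat.mul_mod_right pa pb
    rw [this, hA0]
  have hBm : B m = b := by
    rw [hBmod m]
    have : m % pb = 0 := by rw [hm]; exact Nat.mul_mod_left pa pb
    rw [this, hB0]
  set P : (ℕ → Fin 2) → ℕ → X :=
    fun s i => if s (i / m) = 0 then A (i % m) else B (i % m) with hP
  have hPs : ∀ s i, P s i = if s (i / m) = 0 then A (i % m) else B (i % m) :=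
    fun s i => rfl
  have hPstart : ∀ s, dist (P s 0) u < ρ := by
    intro s
    rw [hPs]
    by_cases h : s (0 / m) = 0
    · rw [if_pos h, Nat.zero_mod, hA0]; exact hau
    · rw [if_neg h, Nat.zero_mod, hB0]; exact hbu
  have hPn : ∀ s q, P s (q * m + n) = if s q = 0 then f^[n] a else f^[n] b := by
    intro s q
    have hdivn : (q * m + n) / m = q := by
      rw [Nat.add_comm, Nat.add_mul_div_right n q hm0, Nat.div_eq_of_lt hnm, Nat.zero_add]
    have hmodn : (q * m + n) % m = n := by
      rw [Nat.add_comm, Nat.add_mul_mod_self_right, Nat.mod_eq_of_lt hnm]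
    rw [hPs, hdivn, hmodn, hAn, hBn]
  have hABd : dist a b < 2 * ρ := by
    calc dist a b ≤ dist a u + dist u b := dist_triangle _ _ _
      _ < ρ + ρ := add_lt_add hau (by rwa [dist_comm] at hbu)
      _ = 2 * ρ := by ring
  have hPpo : ∀ s, IsPseudoOrbit f δ₀ (P s) := by
    intro s i
    obtain ⟨q, r₀, hi, hrm⟩ : ∃ q r₀, i = m * q + r₀ ∧ r₀ < m :=
      ⟨i / m, i % m, (Nat.div_add_mod i m).symm, Nat.mod_lt i hm0⟩
    have hqe : i / m = q := by
      rw [hi, Nat.mul_add_div hm0, Nat.div_eq_of_lt hrm, Nat.add_zero]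
    have hre : i % m = r₀ := by
      rw [hi, Nat.mul_add_mod, Nat.mod_eq_of_lt hrm]
    rcases Nat.lt_or_ge (r₀ + 1) m with h1 | h1
    · have hi1 : i + 1 = m * q + (r₀ + 1) := by omega
      have hq1 : (i + 1) / m = q := by
        rw [hi1, Nat.mul_add_div hm0, Nat.div_eq_of_lt h1, Nat.add_zero]
      have hr1 : (i + 1) % m = r₀ + 1 := by
        rw [hi1, Nat.mul_add_mod, Nat.mod_eq_of_lt h1]
      rw [hPs s i, hPs s (i+1), hqe, hre, hq1, hr1]
      by_cases h : s q = 0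
      · rw [if_pos h, if_pos h]; exact (hAj r₀).trans_le (by linarith)
      · rw [if_neg h, if_neg h]; exact (hBj r₀).trans_le (by linarith)
    · have hrm1 : r₀ + 1 = m := by omega
      have hi1 : i + 1 = m * (q + 1) := by
        rw [Nat.mul_add, Nat.mul_one]; omega
      have hq1 : (i + 1) / m = q + 1 := by
        rw [hi1, Nat.mul_div_cancel_left _ hm0]
      have hr1 : (i + 1) % m = 0 := by rw [hi1, Nat.mul_mod_right]
      have hAjump : dist (f (A r₀)) a < δ₀/4 := by
        have h := hAj r₀
        rw [hrm1, hAm] at h; exact h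
      have hBjump : dist (f (B r₀)) b < δ₀/4 := by
        have h := hBj r₀
        rw [hrm1, hBm] at h; exact h
      have key : ∀ w x y : X, dist w x < δ₀/4 → dist x y < 2 * ρ → dist w y < δ₀ := by
        intro w x y hwx hxy
        calc dist w y ≤ dist w x + dist x y := dist_triangle _ _ _
          _ < δ₀/4 + 2 * ρ := add_lt_add hwx hxy
          _ ≤ δ₀/4 + 2 * (δ₀/4) := by linarith
          _ < δ₀ := by linarith
      have haa : dist a a < 2 * ρ := by rw [dist_self]; linarith
      have hbb : dist b b < 2 * ρ := by rw [dist_self]; linarith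
      have hba : dist b a < 2 * ρ := by rwa [dist_comm] at hABd
      rw [hPs s i, hPs s (i+1), hqe, hre, hq1, hr1, hA0, hB0]
      by_cases h : s q = 0 <;> by_cases h' : s (q+1) = 0
      · rw [if_pos h, if_pos h']; exact key _ _ _ hAjump haa
      · rw [if_pos h, if_neg h']; exact key _ _ _ hAjump hABd
      · rw [if_neg h, if_pos h']; exact key _ _ _ hBjump hba
      · rw [if_neg h, if_neg h']; exact key _ _ _ hBjump hbb
  have hPshift : ∀ s i, P s (i + m) = P (shiftMap 2 s) i := by
    intro s i
    rw [hPs, hPs, Nat.add_div_right i hm0, Nat.add_mod_right]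
    rfl
  set K : (ℕ → Fin 2) → Set X :=
    fun s => {x | ∀ i, dist (f^[i] x) (P s i) ≤ ε} with hK
  have hKmem : ∀ s x, x ∈ K s ↔ ∀ i, dist (f^[i] x) (P s i) ≤ ε := fun s x => Iff.rfl
  have hKne : ∀ s, ∃ x, x ∈ K s := by
    intro s
    obtain ⟨x, hx⟩ := htrace (P s) (hPpo s)
    exact ⟨x, fun i => (hx i).le⟩
  have hsep : ∀ s s' x, x ∈ K s → x ∈ K s' → s = s' := by
    intro s s' x hx hx'
    funext q
    by_contra hne
    have h1 := hx (q * m + n)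
    have h2 := hx' (q * m + n)
    rw [hPn s q] at h1
    rw [hPn s' q] at h2
    have hd : dist (f^[n] a) (f^[n] b) ≤ 2 * ε := by
      rcases (by omega : (s q = 0 ∧ s' q = 1) ∨ (s q = 1 ∧ s' q = 0)) with ⟨e1, e2⟩ | ⟨e1, e2⟩
      · rw [e1, if_pos rfl] at h1
        rw [e2, if_neg (by decide)] at h2
        calc dist (f^[n] a) (f^[n] b)
            ≤ dist (f^[n] a) (f^[q * m + n] x) + dist (f^[q * m + n] x) (f^[n] b) :=
              dist_triangle _ _ _
          _ ≤ ε + ε := add_le_add (by rwa [dist_comm] at h1) h2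
          _ = 2 * ε := by ring
      · rw [e1, if_neg (by decide)] at h1
        rw [e2, if_pos rfl] at h2
        calc dist (f^[n] a) (f^[n] b)
            ≤ dist (f^[n] a) (f^[q * m + n] x) + dist (f^[q * m + n] x) (f^[n] b) :=
              dist_triangle _ _ _
          _ ≤ ε + ε := add_le_add (by rwa [dist_comm] at h2) h1
          _ = 2 * ε := by ring
    linarith [hab]
  set Y : Set X := {x | ∃ s, x ∈ K s} with hY
  set π : X → (ℕ → Fin 2) :=
    fun x => if h : ∃ s, x ∈ K s then h.choose else fun _ => 0 with hπ
  have hπval : ∀ s x, x ∈ K s → π x = s := by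
    intro s x hx
    have h : ∃ s, x ∈ K s := ⟨s, hx⟩
    show (if h' : ∃ s, x ∈ K s then h'.choose else fun _ => 0) = s
    rw [dif_pos h]
    exact hsep _ _ _ h.choose_spec hx
  have hYclosed : IsClosed Y := by
    have hCl : IsClosed {p : (ℕ → Fin 2) × X | ∀ i, dist (f^[i] p.2) (P p.1 i) ≤ ε} := by
      have heq : {p : (ℕ → Fin 2) × X | ∀ i, dist (f^[i] p.2) (P p.1 i) ≤ ε}
          = ⋂ i : ℕ, {p : (ℕ → Fin 2) × X | dist (f^[i] p.2) (P p.1 i) ≤ ε} := by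
        ext p; simp [Set.mem_iInter]
      rw [heq]
      refine isClosed_iInter fun i => ?_
      have hc1 : Continuous fun p : (ℕ → Fin 2) × X => f^[i] p.2 :=
        (hf.iterate i).comp continuous_snd
      have hc2 : Continuous fun p : (ℕ → Fin 2) × X => P p.1 i := by
        have heq2 : (fun p : (ℕ → Fin 2) × X => P p.1 i)
            = (fun v : Fin 2 => if v = 0 then A (i % m) else B (i % m)) ∘
              (fun p : (ℕ → Fin 2) × X => p.1 (i / m)) := by
          funext p; exact hPs p.1 i
        rw [heq2]
        exact Continuous.comp continuous_of_discreteTopology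
          ((continuous_apply (i / m)).comp continuous_fst)
      exact isClosed_le (hc1.dist hc2) continuous_const
    have himg : Y = Prod.snd '' {p : (ℕ → Fin 2) × X | ∀ i, dist (f^[i] p.2) (P p.1 i) ≤ ε} := by
      ext x
      constructor
      · rintro ⟨s, hs⟩; exact ⟨(s, x), hs, rfl⟩
      · rintro ⟨⟨s, x'⟩, hs, rfl⟩; exact ⟨s, hs⟩
    rw [himg]
    exact isClosedMap_snd_of_compactSpace _ hCl
  have hYU : Y ⊆ U := by
    rintro x ⟨s, hs⟩
    have h0 := hs 0
    rw [Function.iterate_zero_apply] at h0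
    apply hrU
    rw [Metric.mem_ball]
    calc dist x u ≤ dist x (P s 0) + dist (P s 0) u := dist_triangle _ _ _
      _ ≤ ε + ρ := add_le_add h0 (hPstart s).le
      _ < r := by linarith
  have hmapsto : ∀ s x, x ∈ K s → f^[m] x ∈ K (shiftMap 2 s) := by
    intro s x hx i
    show dist (f^[i] (f^[m] x)) (P (shiftMap 2 s) i) ≤ ε
    rw [← Function.iterate_add_apply f i m x, ← hPshift s i]
    exact hx (i + m)
  have hcont : ContinuousOn π Y := by
    intro x₀ hx₀
    obtain ⟨s₀, hs₀⟩ := hx₀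
    have hcoord : ∀ j : ℕ, ∀ᶠ x in nhdsWithin x₀ Y, π x j = π x₀ j := by
      intro j
      have hO : Metric.ball (f^[j * m + n] x₀) (δ - 2*ε) ∈ nhds (f^[j * m + n] x₀) :=
        Metric.ball_mem_nhds _ (by linarith)
      have hpre : (f^[j * m + n]) ⁻¹' Metric.ball (f^[j * m + n] x₀) (δ - 2*ε) ∈ nhds x₀ :=
        (hf.iterate (j * m + n)).continuousAt.preimage_mem_nhds hO
      have hpre' : (f^[j * m + n]) ⁻¹' Metric.ball (f^[j * m + n] x₀) (δ - 2*ε)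
          ∈ nhdsWithin x₀ Y := nhdsWithin_le_nhds hpre
      filter_upwards [hpre', self_mem_nhdsWithin] with x hxO hxY
      obtain ⟨s, hs⟩ := hxY
      rw [hπval s x hs, hπval s₀ x₀ hs₀]
      by_contra hne
      have hdx : dist (f^[j * m + n] x) (f^[j * m + n] x₀) < δ - 2*ε := by
        have := hxO
        rwa [Set.mem_preimage, Metric.mem_ball] at this
      have e1 := hs (j * m + n)
      have e2 := hs₀ (j * m + n)
      rw [hPn s j] at e1
      rw [hPn s₀ j] at e2
      have hfar : dist (f^[n] a) (f^[n] b) < δ ∨ dist (f^[n] b) (f^[n] a) < δ := by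
        rcases (by omega : (s j = 0 ∧ s₀ j = 1) ∨ (s j = 1 ∧ s₀ j = 0)) with ⟨g1, g2⟩ | ⟨g1, g2⟩
        · rw [g1, if_pos rfl] at e1
          rw [g2, if_neg (by decide)] at e2
          left
          calc dist (f^[n] a) (f^[n] b)
              ≤ dist (f^[n] a) (f^[j * m + n] x) + dist (f^[j * m + n] x) (f^[j * m + n] x₀)
                + dist (f^[j * m + n] x₀) (f^[n] b) := dist_triangle4 _ _ _ _
            _ < ε + (δ - 2*ε) + ε := by
                have l1 : dist (f^[n] a) (f^[j * m + n] x) ≤ ε := by rwa [dist_comm] at e1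
                have l3 : dist (f^[j * m + n] x₀) (f^[n] b) ≤ ε := e2
                linarith
            _ = δ := by ring
        · rw [g1, if_neg (by decide)] at e1
          rw [g2, if_pos rfl] at e2
          right
          calc dist (f^[n] b) (f^[n] a)
              ≤ dist (f^[n] b) (f^[j * m + n] x) + dist (f^[j * m + n] x) (f^[j * m + n] x₀)
                + dist (f^[j * m + n] x₀) (f^[n] a) := dist_triangle4 _ _ _ _
            _ < ε + (δ - 2*ε) + ε := by
                have l1 : dist (f^[n] b) (f^[j * m + n] x) ≤ ε := by rwa [dist_comm] at e1
                have l3 : dist (f^[j * m + n] x₀) (f^[n] a) ≤ ε := e2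
                linarith
            _ = δ := by ring
      rcases hfar with hfar | hfar
      · linarith [hab]
      · rw [dist_comm] at hfar; linarith [hab]
    rw [continuousWithinAt_pi]
    intro j
    exact Filter.Tendsto.congr' ((hcoord j).mono fun x hx => hx.symm) tendsto_const_nhds
  have hsurj : π '' Y = Set.univ := by
    apply Set.eq_univ_of_forall
    intro s
    obtain ⟨x, hx⟩ := hKne s
    exact ⟨x, ⟨s, hx⟩, hπval s x hx⟩
  refine ⟨m, hm0, Y, hYclosed, hYU, ?_, π, hcont, hsurj, ?_⟩
  · rintro x ⟨s, hs⟩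
    exact ⟨shiftMap 2 s, hmapsto s x hs⟩
  · rintro x ⟨s, hs⟩
    rw [hπval s x hs, hπval (shiftMap 2 s) (f^[m] x) (hmapsto s x hs)]
end

section
/- Let (X,f) be a non-wandering dynamical system with the shadowing property. Then either (X,f) is equicontinuous or (X,f) has positive topological entropy. -/
open Set Function

variable {X : Type*}

/-!
If `f` is not equicontinuous, there are points `a`, `b`, as close as we like, whose orbits are
`ε`-apart at some time `n`. Since every point is non-wandering, `a` and `b` lie on periodic
pseudo-orbits that follow their true orbits up to time `n`; choosing a common period `m` and
switching between the two at multiples of `m` (possible because `a` and `b` are close) codes every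
binary sequence by a pseudo-orbit. Shadowing turns these into true orbits that are `ε / 2`-apart
at time `m * i + n` whenever the codes differ at `i`, so there are `2 ^ k` orbits distinguishable
up to time `m * k`, and the entropy is at least `log 2 / m`.
-/

open Dynamics ExpGrowth

theorem Dynamics.card_le_netMaxcard_of_separated [MetricSpace X] {f : X → X} {ι : Type*}
    [Fintype ι] {g : ι → X} {n : ℕ} {ε : ℝ} (hε : 0 < ε)
    (hg : Pairwise fun i i' => ∃ j < n, 2 * ε ≤ dist (f^[j] (g i)) (f^[j] (g i'))) :
    (Fintype.card ι : ℕ∞) ≤ netMaxcard f univ {p | dist p.1 p.2 < ε} n := by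
  classical
  have hinj : Injective g := by
    intro i i' hii'
    by_contra hne
    obtain ⟨j, -, hj⟩ := hg hne
    rw [hii', dist_self] at hj
    linarith
  have hnet : IsDynNetIn f univ {p | dist p.1 p.2 < ε} n (Finset.univ.image g : Set X) := by
    refine ⟨subset_univ _, ?_⟩
    simp only [Finset.coe_image, Finset.coe_univ, image_univ]
    rintro _ ⟨i, rfl⟩ _ ⟨i', rfl⟩ hne
    obtain ⟨j, hjn, hj⟩ := hg (hinj.ne_iff.1 hne)
    refine disjoint_left.2 fun w hw hw' => ?_
    have h := mem_ball_dynEntourage.1 hw j hjn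
    have h' := mem_ball_dynEntourage.1 hw' j hjn
    simp only [UniformSpace.ball, mem_preimage, mem_ofPred_eq] at h h'
    linarith [dist_triangle_right (f^[j] (g i)) (f^[j] (g i')) (f^[j] w)]
  simpa [Finset.card_image_of_injective _ hinj] using hnet.card_le_netMaxcard

theorem Dynamics.netEntropyEntourage_pos_of_two_pow_le {T : X → X} {F : Set X} {U : SetRel X X}
    {m : ℕ} (hm : m ≠ 0) (h : ∀ k, 2 ^ k ≤ netMaxcard T F U (m * k)) :
    0 < netEntropyEntourage T F U := by
  have hmono : Monotone fun n => (netMaxcard T F U n : ENNReal) :=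
    fun _ _ hle => ENat.toENNReal_le.2 (netMaxcard_monotone_time T F U hle)
  have hgrowth : ENNReal.log 2 ≤ m * netEntropyEntourage T F U := by
    rw [netEntropyEntourage, ← hmono.expGrowthSup_comp_mul hm, ← expGrowthSup_pow]
    exact expGrowthSup_monotone fun k => by simpa using ENat.toENNReal_le.2 (h k)
  have hlog : (0 : EReal) < ENNReal.log 2 := by simp
  rcases EReal.mul_pos_iff.1 (hlog.trans_le hgrowth) with h | h
  · exact h.2
  · exact absurd h.1 (by simp)

theorem Dynamics.coverEntropy_pos_of_coding [MetricSpace X] {f : X → X} {z : (ℕ → Bool) → X}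
    {m n : ℕ} {ε : ℝ} (hε : 0 < ε) (hnm : n < m)
    (hz : ∀ s t i, s i ≠ t i → 2 * ε ≤ dist (f^[m * i + n] (z s)) (f^[m * i + n] (z t))) :
    0 < coverEntropy f univ := by
  refine (netEntropyEntourage_pos_of_two_pow_le (m := m) (by omega) fun k => ?_).trans_le
    (netEntropyEntourage_le_coverEntropy f univ (Metric.dist_mem_uniformity hε))
  let extend : (Fin k → Bool) → ℕ → Bool :=
    fun σ i => if h : i < k then σ ⟨i, h⟩ else false
  have hsep : Pairwise fun σ τ => ∃ j < m * k,
      2 * ε ≤ dist (f^[j] (z (extend σ))) (f^[j] (z (extend τ))) := by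
    intro σ τ hστ
    obtain ⟨i, hi⟩ := Function.ne_iff.1 hστ
    refine ⟨m * i + n, ?_, hz _ _ i (by simpa [extend] using hi)⟩
    calc m * i + n < m * (i + 1) := by linarith
      _ ≤ m * k := Nat.mul_le_mul_left _ i.isLt
  simpa using card_le_netMaxcard_of_separated hε hsep

section PseudoOrbit

variable [MetricSpace X] {f : X → X} {δ η θ : ℝ}

theorem isPseudoOrbit_blocks {r : ℝ} {m : ℕ} (hm : 0 < m) (q : ℕ → ℕ → X)
    (hq : ∀ i, ∀ j < m, dist (f (q i j)) (q i (j + 1)) < δ)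
    (hjoin : ∀ i, dist (q i m) (q (i + 1) 0) ≤ r) :
    IsPseudoOrbit f (δ + r) fun N => q (N / m) (N % m) := by
  intro N
  have hr : 0 ≤ r := dist_nonneg.trans (hjoin 0)
  have hN := Nat.mod_add_div N m
  have hlt := Nat.mod_lt N hm
  have hstep := hq (N / m) (N % m) hlt
  by_cases hinner : N % m + 1 < m
  · obtain ⟨hdiv, hmod⟩ : (N + 1) / m = N / m ∧ (N + 1) % m = N % m + 1 :=
      (Nat.div_mod_unique hm).2 ⟨by omega, hinner⟩
    simp only [hdiv, hmod]
    linarith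
  · have hlast : N % m + 1 = m := by omega
    obtain ⟨hdiv, hmod⟩ : (N + 1) / m = N / m + 1 ∧ (N + 1) % m = 0 :=
      (Nat.div_mod_unique hm).2 ⟨by rw [Nat.mul_succ]; omega, hm⟩
    simp only [hdiv, hmod]
    rw [hlast] at hstep
    calc dist (f (q (N / m) (N % m))) (q (N / m + 1) 0)
        ≤ dist (f (q (N / m) (N % m))) (q (N / m) m) + dist (q (N / m) m) (q (N / m + 1) 0) :=
          dist_triangle _ _ _
      _ < δ + r := add_lt_add_of_lt_of_le hstep (hjoin _)

theorem isPseudoOrbit_comp_mod {m : ℕ} (hm : 0 < m) {c : ℕ → X}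
    (hc : ∀ j < m, dist (f (c j)) (c (j + 1)) < δ) (hper : c m = c 0) :
    IsPseudoOrbit f δ fun N => c (N % m) := by
  simpa using isPseudoOrbit_blocks (r := 0) hm (fun _ => c) (fun _ => hc) (fun _ => by simp [hper])

theorem UniformContinuous.exists_dist_iterate_lt_of_isPseudoOrbit (hf : UniformContinuous f)
    (n : ℕ) (hη : 0 < η) :
    ∃ θ > 0, ∀ c, IsPseudoOrbit f θ c → ∀ j ≤ n, dist (f^[j] (c 0)) (c j) < η := by
  induction n generalizing η with
  | zero => exact ⟨η, hη, fun c _ j hj => by simp [Nat.le_zero.1 hj, hη]⟩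
  | succ n ih =>
    obtain ⟨ρ, hρ, hfρ⟩ := Metric.uniformContinuous_iff.1 hf (η / 2) (half_pos hη)
    obtain ⟨θ, hθ, htrack⟩ := ih (lt_min hρ hη)
    refine ⟨min θ (η / 2), lt_min hθ (half_pos hη), fun c hc j hj => ?_⟩
    have hcθ : IsPseudoOrbit f θ c := fun k => (hc k).trans_le (min_le_left _ _)
    rcases hj.lt_or_eq with hj | rfl
    · exact (htrack c hcθ j (Nat.lt_succ_iff.1 hj)).trans_le (min_le_right _ _)
    · have hnear := (htrack c hcθ n le_rfl).trans_le (min_le_left _ _)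
      calc dist (f^[n + 1] (c 0)) (c (n + 1))
          ≤ dist (f (f^[n] (c 0))) (f (c n)) + dist (f (c n)) (c (n + 1)) := by
            rw [iterate_succ_apply']; exact dist_triangle _ _ _
        _ < η / 2 + η / 2 := add_lt_add (hfρ hnear) ((hc n).trans_le (min_le_right _ _))
        _ = η := add_halves η

theorem UniformContinuous.exists_isPseudoOrbit_orbit_prefix (hf : UniformContinuous f)
    (n : ℕ) (hη : 0 < η) :
    ∃ θ > 0, ∀ c, IsPseudoOrbit f θ c →
      IsPseudoOrbit f η fun j => if j ≤ n then f^[j] (c 0) else c j := by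
  obtain ⟨θ, hθ, htrack⟩ := hf.exists_dist_iterate_lt_of_isPseudoOrbit (n + 1) hη
  refine ⟨min θ η, lt_min hθ hη, fun c hc j => ?_⟩
  have hcθ : IsPseudoOrbit f θ c := fun k => (hc k).trans_le (min_le_left _ _)
  dsimp only
  split_ifs with hj hj'
  · simpa [← iterate_succ_apply' f j] using hη
  · rw [← iterate_succ_apply' f j]; exact htrack c hcθ _ (by omega)
  · omega
  · exact (hc j).trans_le (min_le_right _ _)

theorem NonWanderingPt.exists_chain_loop {x : X} (hf : UniformContinuous f)
    (hx : NonWanderingPt f x) (hθ : 0 < θ) :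
    ∃ k, 0 < k ∧ ∃ c : ℕ → X, c 0 = x ∧ c k = x ∧
      ∀ j < k, dist (f (c j)) (c (j + 1)) < θ := by
  obtain ⟨ρ, hρ, hfρ⟩ := Metric.uniformContinuous_iff.1 hf (θ / 2) (half_pos hθ)
  obtain ⟨k, hk, y, hy, hky⟩ :=
    hx _ (Metric.ball_mem_nhds x (lt_min hρ (half_pos hθ)))
  rw [Metric.mem_ball] at hy hky
  refine ⟨k, hk, fun j => if j = 0 ∨ j = k then x else f^[j] y, by simp, by simp, ?_⟩
  have hnear : ∀ j ≤ k,
      dist (if j = 0 ∨ j = k then x else f^[j] y) (f^[j] y) < min ρ (θ / 2) := by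
    intro j hj
    split_ifs with h
    · rcases h with rfl | rfl
      · simpa [dist_comm] using hy
      · simpa [dist_comm] using hky
    · simpa using lt_min hρ (half_pos hθ)
  intro j hj
  calc dist (f (if j = 0 ∨ j = k then x else f^[j] y))
        (if j + 1 = 0 ∨ j + 1 = k then x else f^[j + 1] y)
      ≤ dist (f (if j = 0 ∨ j = k then x else f^[j] y)) (f (f^[j] y))
        + dist (f^[j + 1] y) (if j + 1 = 0 ∨ j + 1 = k then x else f^[j + 1] y) := by
        rw [iterate_succ_apply']; exact dist_triangle _ _ _
    _ < θ / 2 + θ / 2 := by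
        refine add_lt_add (hfρ ((hnear j hj.le).trans_le (min_le_left _ _))) ?_
        rw [dist_comm]; exact (hnear (j + 1) hj).trans_le (min_le_right _ _)
    _ = θ := add_halves θ

end PseudoOrbit

section Coding

variable [MetricSpace X] {f : X → X} {η δ : ℝ}

theorem NonWanderingPt.exists_periodic_isPseudoOrbit {x : X} (hf : UniformContinuous f)
    (hx : NonWanderingPt f x) (n : ℕ) (hη : 0 < η) :
    ∃ P, n < P ∧ ∃ p : ℕ → X,
      IsPseudoOrbit f η p ∧ Periodic p P ∧ p 0 = x ∧ p n = f^[n] x := by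
  obtain ⟨θ, hθ, hprefix⟩ := hf.exists_isPseudoOrbit_orbit_prefix n hη
  obtain ⟨k, hk, c, hc0, hck, hc⟩ := hx.exists_chain_loop hf hθ
  set d := fun j => if j ≤ n then f^[j] x else c (j % k)
  have hd : IsPseudoOrbit f η d := by
    simpa [hc0] using hprefix _ (isPseudoOrbit_comp_mod hk hc (hck.trans hc0.symm))
  have hnP : n < k * (n + 1) := by nlinarith
  have hdP : d (k * (n + 1)) = d 0 := by simp [d, Nat.mul_mod_right, hnP.not_ge, hc0]
  refine ⟨k * (n + 1), hnP, fun j => d (j % (k * (n + 1))),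
    isPseudoOrbit_comp_mod (by omega) (fun j _ => hd j) hdP, fun j => by simp, ?_, ?_⟩
  · simp [d]
  · simp [d, Nat.mod_eq_of_lt hnP]

theorem exists_isPseudoOrbit_coding (hf : UniformContinuous f) {a b : X}
    (ha : NonWanderingPt f a) (hb : NonWanderingPt f b) (hδ : 0 < δ) (hab : dist a b < δ / 2)
    (n : ℕ) :
    ∃ m, n < m ∧ ∃ x : (ℕ → Bool) → ℕ → X, ∀ s, IsPseudoOrbit f δ (x s) ∧
      ∀ i, x s (m * i + n) = f^[n] (cond (s i) b a) := by
  have hnw : ∀ t, NonWanderingPt f (cond t b a) := by rintro (_ | _) <;> assumption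
  choose P hnP p hp hper hp0 hpn using
    fun t => (hnw t).exists_periodic_isPseudoOrbit hf n (half_pos hδ)
  set m := P false * P true with hm
  have hnm : n < m :=
    (hnP false).trans_le (Nat.le_mul_of_pos_right _ (n.zero_le.trans_lt (hnP true)))
  have hpm : ∀ t, p t m = cond t b a := by
    rintro (_ | _)
    · rw [hm, mul_comm, ← hp0 false]; exact_mod_cast (hper false).nat_mul_eq (P true)
    · rw [← hp0 true]; exact_mod_cast (hper true).nat_mul_eq (P false)
  have hm0 : 0 < m := n.zero_le.trans_lt hnm
  refine ⟨m, hnm, fun s N => p (s (N / m)) (N % m), fun s => ⟨?_, fun i => ?_⟩⟩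
  · have hjoin : ∀ i, dist (p (s i) m) (p (s (i + 1)) 0) ≤ dist a b := by
      intro i
      rw [hpm, hp0]
      cases s i <;> cases s (i + 1) <;> simp [dist_comm]
    have hblocks :=
      isPseudoOrbit_blocks hm0 (fun i => p (s i)) (fun i j _ => hp (s i) j) hjoin
    exact fun N => (hblocks N).trans (by linarith)
  · obtain ⟨hdiv, hmod⟩ : (m * i + n) / m = i ∧ (m * i + n) % m = n :=
      (Nat.div_mod_unique hm0).2 ⟨by ring, hnm⟩
    simp only [hdiv, hmod, hpn]

end Coding

theorem equicontinuous_or_positive_entropy [MetricSpace X] [CompactSpace X]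
    (f : X → X) (hf : Continuous f) (hnw : ∀ x : X, NonWanderingPt f x)
    (hsh : HasShadowing f) :
    EquicontinuousMap f ∨ 0 < Dynamics.coverEntropy f Set.univ := by
  refine or_iff_not_imp_left.2 fun hequi => ?_
  obtain ⟨ε, hε, hsens⟩ : ∃ ε > 0, ∀ δ > 0, ∃ x y : X, dist x y < δ ∧
      ∃ n, ε ≤ dist (f^[n] x) (f^[n] y) := by
    simpa [EquicontinuousMap] using hequi
  obtain ⟨δ, hδ, hshadow⟩ := hsh (ε / 4) (by positivity)
  obtain ⟨a, b, hab, n, hsep⟩ := hsens (δ / 2) (by positivity)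
  obtain ⟨m, hnm, x, hx⟩ := exists_isPseudoOrbit_coding
    (CompactSpace.uniformContinuous_of_continuous hf) (hnw a) (hnw b) hδ hab n
  choose z hz using fun s => hshadow (x s) (hx s).1
  refine coverEntropy_pos_of_coding (z := z) (ε := ε / 4) (by positivity) hnm fun s t i hst => ?_
  have hfar : ε ≤ dist (f^[n] (cond (s i) b a)) (f^[n] (cond (t i) b a)) := by
    cases hs : s i <;> cases ht : t i <;> simp_all [dist_comm]
  have hzs := hz s (m * i + n)
  have hzt := hz t (m * i + n)
  rw [(hx s).2] at hzs
  rw [(hx t).2] at hzt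
  linarith [dist_triangle4 (f^[n] (cond (s i) b a)) (f^[m * i + n] (z s))
    (f^[m * i + n] (z t)) (f^[n] (cond (t i) b a)),
    dist_comm (f^[m * i + n] (z s)) (f^[n] (cond (s i) b a))]
end

section
/- Let (X,f) be a dynamical system with the shadowing property. If there exists a point x that is non-wandering but not recurrent (i.e., x ∈ Ω(f) \ R(f)), then (X,f) has positive topological entropy. -/
open Set Function

variable {X : Type*}

/-!
Let `x` be non-wandering but not recurrent, so that its orbit stays `ε` away from `x`. Since
`x` is non-wandering, for every `δ` there are `δ`-pseudo-orbit loops `x, f y, …, f^[k-1] y, x`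
with `y` as close to `x` as we like; take a short one of length `m` and a long one of length
`k > m` whose first `m` steps follow the true orbit of `x`. At time `m` the first loop is back
at `x` while the second is near `f^[m] x`, at distance about `ε`. Concatenating these two loops
(padded to a common period) along arbitrary binary words gives pseudo-orbits, and shadowing
turns `2 ^ n` words into `2 ^ n` orbits that are separated in time `O(n)`.
-/

open Dynamics ExpGrowth

section Return

variable [MetricSpace X] {f : X → X} {x : X}

lemma exists_le_dist_iterate_of_not_recurrentPt (h : ¬ RecurrentPt f x) :
    ∃ ε > 0, ∀ k, 1 ≤ k → ε ≤ dist (f^[k] x) x := by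
  simp only [RecurrentPt, not_forall, not_exists, not_and] at h
  obtain ⟨U, hU, hnot⟩ := h
  obtain ⟨ε, hε, hball⟩ := Metric.mem_nhds_iff.1 hU
  exact ⟨ε, hε, fun k hk ↦ not_lt.1 fun hlt ↦ hnot k hk (hball (Metric.mem_ball.2 hlt))⟩

lemma NonWanderingPt.exists_return (hf : Continuous f) (hx : NonWanderingPt f x) {ε : ℝ}
    (hε : 0 < ε) (hesc : ∀ k, 1 ≤ k → ε ≤ dist (f^[k] x) x) (N : ℕ) {γ : ℝ} (hγ : 0 < γ) :
    ∃ y k, N < k ∧ (∀ t ≤ N, dist (f^[t] y) (f^[t] x) < γ) ∧ dist (f^[k] y) x < γ := by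
  set η := min γ (ε / 2)
  have hη : 0 < η := by positivity
  have hnear : ∀ᶠ y in nhds x, ∀ t ∈ Finset.range (N + 1), dist (f^[t] y) (f^[t] x) < η :=
    (Filter.eventually_all_finset _).2 fun t _ ↦
      (hf.iterate t).continuousAt.eventually (Metric.ball_mem_nhds _ hη)
  obtain ⟨k, hk, y, hy, hky⟩ := hx _ hnear
  have hky_near : dist (f^[k] y) x < η := by simpa using hky 0 (by simp)
  refine ⟨y, k, ?_, fun t ht ↦ (hy t (Finset.mem_range.2 (by omega))).trans_le (min_le_left _ _),
    hky_near.trans_le (min_le_left _ _)⟩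
  -- an early return would bring `f^[k] x` within `ε` of `x`
  by_contra! hkN
  linarith [hy k (Finset.mem_range.2 (by omega)), hesc k hk, min_le_right γ (ε / 2),
    dist_triangle_left (f^[k] x) x (f^[k] y)]

end Return

def returnLoop (f : X → X) (x y : X) (k n : ℕ) : X :=
  if n % k = 0 then x else f^[n % k] y

lemma returnLoop_periodic (f : X → X) (x y : X) (k : ℕ) : Periodic (returnLoop f x y k) k := by
  intro n
  simp only [returnLoop, Nat.add_mod_right]

section PseudoOrbit

variable [MetricSpace X] {f : X → X} {δ : ℝ}

lemma isPseudoOrbit_returnLoop {x y : X} {k : ℕ} (hk : 2 ≤ k) (hstart : dist (f x) (f y) < δ)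
    (hreturn : dist (f^[k] y) x < δ) : IsPseudoOrbit f δ (returnLoop f x y k) := by
  intro n
  have hδ : 0 < δ := dist_nonneg.trans_lt hstart
  have hnk : n % k < k := Nat.mod_lt n (by omega)
  have hsucc : (n + 1) % k = if n % k + 1 = k then 0 else n % k + 1 := by
    rw [Nat.add_mod, Nat.mod_eq_of_lt (by omega : 1 < k)]
    split_ifs with h
    · rw [h, Nat.mod_self]
    · exact Nat.mod_eq_of_lt (by omega)
  simp only [returnLoop, hsucc]
  by_cases h0 : n % k = 0
  · simpa [h0, show 1 ≠ k by omega] using hstart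
  by_cases hlast : n % k + 1 = k
  · simpa [h0, hlast, ← iterate_succ_apply' f] using hreturn
  · simpa [h0, hlast, ← iterate_succ_apply' f] using hδ

lemma isPseudoOrbit_switch {ι : Type*} {a : ι → ℕ → X} {M : ℕ} (hper : ∀ i, Periodic (a i) M)
    (hstart : ∀ i j, a i 0 = a j 0) (hpo : ∀ i, IsPseudoOrbit f δ (a i)) (s : ℕ → ι) :
    IsPseudoOrbit f δ fun n ↦ a (s (n / M)) n := by
  intro n
  by_cases hdvd : M ∣ n + 1
  · obtain ⟨q, hq⟩ := hdvd
    have hreset : ∀ i j, a i (n + 1) = a j (n + 1) := fun i j ↦ by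
      rw [hq, mul_comm, ← Nat.cast_id q, (hper i).nat_mul_eq, (hper j).nat_mul_eq, hstart]
    simpa only [hreset (s ((n + 1) / M)) (s (n / M))] using hpo (s (n / M)) n
  · simpa only [Nat.succ_div_of_not_dvd hdvd] using hpo (s (n / M)) n

end PseudoOrbit

lemma coverEntropy_pos_of_pow_le_netMaxcard [UniformSpace X] {f : X → X} {F : Set X}
    {U : SetRel X X} (hU : U ∈ uniformity X) {M : ℕ} (hM : M ≠ 0)
    (h : ∀ k : ℕ, (2 : ℕ∞) ^ k ≤ netMaxcard f F U (M * k)) :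
    0 < coverEntropy f F := by
  have hmono : Monotone fun n : ℕ ↦ (netMaxcard f F U n : ENNReal) :=
    ENat.toENNReal_mono.comp (netMaxcard_monotone_time f F U)
  have hlog : ENNReal.log 2 ≤ M * netEntropyEntourage f F U := calc
    ENNReal.log 2 = expGrowthSup fun k : ℕ ↦ (2 : ENNReal) ^ k := expGrowthSup_pow.symm
    _ ≤ expGrowthSup fun k ↦ (netMaxcard f F U (M * k) : ENNReal) :=
      expGrowthSup_monotone fun k ↦ by simpa using ENat.toENNReal_le.2 (h k)
    _ = M * netEntropyEntourage f F U := hmono.expGrowthSup_comp_mul hM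
  have hpos : 0 < netEntropyEntourage f F U := by
    by_contra! hle
    have hlog_pos : 0 < ENNReal.log 2 :=
      ENNReal.log_one ▸ ENNReal.log_lt_log_iff.2 ENNReal.one_lt_two
    exact (hlog_pos.trans_le hlog).not_ge (EReal.mul_nonpos_iff.2 (Or.inl ⟨by positivity, hle⟩))
  exact hpos.trans_le (netEntropyEntourage_le_coverEntropy f F hU)

lemma card_le_netMaxcard_of_pairwise_separated [MetricSpace X] {f : X → X} {F : Set X}
    {ι : Type*} [Fintype ι] {z : ι → X} (hzF : ∀ i, z i ∈ F) {ε : ℝ} (hε : 0 < ε) {n : ℕ}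
    (hsep : Pairwise fun i j ↦ ∃ t < n, 2 * ε ≤ dist (f^[t] (z i)) (f^[t] (z j))) :
    (Fintype.card ι : ℕ∞) ≤ netMaxcard f F {p : X × X | dist p.1 p.2 < ε} n := by
  classical
  have hinj : Injective z := fun i j hij ↦ by
    by_contra hne
    obtain ⟨t, -, ht⟩ := hsep hne
    rw [hij, dist_self] at ht
    linarith
  have hnet : IsDynNetIn f F {p : X × X | dist p.1 p.2 < ε} n (Finset.univ.image z : Set X) := by
    simp only [Finset.coe_image, Finset.coe_univ, Set.image_univ]
    refine ⟨Set.range_subset_iff.2 hzF, ?_⟩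
    rintro _ ⟨i, rfl⟩ _ ⟨j, rfl⟩ hij
    obtain ⟨t, ht, hdist⟩ := hsep (ne_of_apply_ne z hij)
    refine Set.disjoint_left.2 fun u hui huj ↦ ?_
    have hi := mem_ball_dynEntourage.1 hui t ht
    have hj := mem_ball_dynEntourage.1 huj t ht
    simp only [UniformSpace.ball, Set.mem_preimage, Set.mem_ofPred_eq] at hi hj
    linarith [dist_triangle_right (f^[t] (z i)) (f^[t] (z j)) (f^[t] u)]
  simpa [Finset.card_image_of_injective _ hinj] using hnet.card_le_netMaxcard

lemma pow_le_netMaxcard_of_traced [MetricSpace X] {f : X → X} {δ ε : ℝ} (hε : 0 < ε)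
    (htrace : ∀ x : ℕ → X, IsPseudoOrbit f δ x → ∃ z : X, Traces f ε z x)
    {a b : ℕ → X} (hapo : IsPseudoOrbit f δ a) (hbpo : IsPseudoOrbit f δ b)
    {M j : ℕ} (ha : Periodic a M) (hb : Periodic b M) (hab : a 0 = b 0)
    (hj : j < M) (hsep : 4 * ε ≤ dist (a j) (b j)) (k : ℕ) :
    (2 : ℕ∞) ^ k ≤ netMaxcard f univ {p : X × X | dist p.1 p.2 < ε} (M * k) := by
  set c : Fin 2 → ℕ → X := ![a, b]
  have hc_sep : ∀ p q : Fin 2, p ≠ q → 4 * ε ≤ dist (c p j) (c q j) := by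
    intro p q hpq
    fin_cases p <;> fin_cases q <;> simp_all [c, dist_comm]
  have hc_per : ∀ p, Periodic (c p) M := fun p ↦ by fin_cases p <;> simpa [c]
  let word (v : Fin k → Fin 2) (i : ℕ) : Fin 2 := if hi : i < k then v ⟨i, hi⟩ else 0
  have hpo (v : Fin k → Fin 2) : IsPseudoOrbit f δ fun n ↦ c (word v (n / M)) n :=
    isPseudoOrbit_switch hc_per
      (fun i i' ↦ by fin_cases i <;> fin_cases i' <;> simp [c, hab])
      (fun i ↦ by fin_cases i <;> simpa [c]) (word v)
  choose z hz using fun v ↦ htrace _ (hpo v)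
  have hzsep : Pairwise fun v w : Fin k → Fin 2 ↦
      ∃ t < M * k, 2 * ε ≤ dist (f^[t] (z v)) (f^[t] (z w)) := by
    intro v w hvw
    obtain ⟨i, hi⟩ := Function.ne_iff.1 hvw
    have ht : i * M + j < M * k := by nlinarith [i.isLt]
    have hword : ∀ u : Fin k → Fin 2, c (word u ((i * M + j) / M)) (i * M + j) = c (u i) j := by
      intro u
      have hdiv : (i * M + j) / M = i := by
        rw [add_comm, Nat.add_mul_div_right _ _ (by omega), Nat.div_eq_of_lt hj, zero_add]
      rw [hdiv, add_comm, ← Nat.cast_id (i : ℕ), ((hc_per _).nat_mul i) j]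
      simp [word]
    refine ⟨i * M + j, ht, ?_⟩
    have hv : dist (f^[i * M + j] (z v)) (c (v i) j) < ε := by
      simpa only [hword] using hz v (i * M + j)
    have hw : dist (f^[i * M + j] (z w)) (c (w i) j) < ε := by
      simpa only [hword] using hz w (i * M + j)
    linarith [hc_sep _ _ hi, dist_triangle4 (c (v i) j) (f^[i * M + j] (z v))
      (f^[i * M + j] (z w)) (c (w i) j), dist_comm (c (v i) j) (f^[i * M + j] (z v))]
  simpa using card_le_netMaxcard_of_pairwise_separated (fun _ ↦ mem_univ _) hε hzsep

theorem nonwandering_nonrecurrent_implies_positive_entropy_general [MetricSpace X]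
    (f : X → X) (hf : Continuous f) (hsh : HasShadowing f)
    (h : ∃ x : X, NonWanderingPt f x ∧ ¬ RecurrentPt f x) :
    0 < Dynamics.coverEntropy f Set.univ := by
  obtain ⟨x, hnw, hnr⟩ := h
  obtain ⟨ε, hε, hesc⟩ := exists_le_dist_iterate_of_not_recurrentPt hnr
  obtain ⟨δ, hδ, htrace⟩ := hsh (ε / 8) (by positivity)
  obtain ⟨y₁, m, hm, hy₁, hret₁⟩ := hnw.exists_return hf hε hesc 1 hδ
  obtain ⟨y₂, k, hk, hy₂, hret₂⟩ := hnw.exists_return hf hε hesc m (lt_min hδ (half_pos hε))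
  have hpo₁ : IsPseudoOrbit f δ (returnLoop f x y₁ m) :=
    isPseudoOrbit_returnLoop hm (by simpa [dist_comm] using hy₁ 1 le_rfl) hret₁
  have hpo₂ : IsPseudoOrbit f δ (returnLoop f x y₂ k) :=
    isPseudoOrbit_returnLoop (by omega)
      (by simpa [dist_comm] using (hy₂ 1 (by omega)).trans_le (min_le_left _ _))
      (hret₂.trans_le (min_le_left _ _))
  have hsep : 4 * (ε / 8) ≤ dist (returnLoop f x y₁ m m) (returnLoop f x y₂ k m) := by
    have h₁ : returnLoop f x y₁ m m = x := by simp [returnLoop]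
    have h₂ : returnLoop f x y₂ k m = f^[m] y₂ := by
      simp [returnLoop, Nat.mod_eq_of_lt hk, show m ≠ 0 by omega]
    rw [h₁, h₂]
    linarith [hesc m (by omega), (hy₂ m le_rfl).trans_le (min_le_right _ _),
      dist_triangle_right (f^[m] x) x (f^[m] y₂), dist_comm (f^[m] y₂) (f^[m] x)]
  refine coverEntropy_pos_of_pow_le_netMaxcard (Metric.dist_mem_uniformity (by positivity))
    (M := k * m) (Nat.mul_ne_zero (by omega) (by omega)) fun n ↦
      pow_le_netMaxcard_of_traced (by positivity) htrace hpo₁ hpo₂ ?_ ?_ rfl ?_ hsep n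
  · exact Nat.cast_id k ▸ (returnLoop_periodic f x y₁ m).nat_mul k
  · simpa [mul_comm] using (returnLoop_periodic f x y₂ k).nat_mul m
  · nlinarith

theorem nonwandering_nonrecurrent_implies_positive_entropy [MetricSpace X] [CompactSpace X]
    (f : X → X) (hf : Continuous f) (hsh : HasShadowing f)
    (h : ∃ x : X, NonWanderingPt f x ∧ ¬ RecurrentPt f x) :
    0 < Dynamics.coverEntropy f Set.univ :=
  nonwandering_nonrecurrent_implies_positive_entropy_general f hf hsh h
end

section
/- Let (X,f) be a non-trivial non-wandering dynamical system with the shadowing property. If (X,f) is weakly mixing, then for every d ≥ 1 and all nonempty open subsets U_0, U_1, …, U_d of X, there exist m ∈ ℕ, a closed f^m-invariant subset Y of X, and a factor map π : (Y, f^m) → ({0,1,…,d}^ℕ, σ) onto the full shift on d+1 symbols such that π^{-1}(C[i]) ⊆ U_i for all i = 0,…,d, where C[i] is the cylinder of sequences starting with symbol i. -/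
open Set Function

variable {X : Type*}

/-!
Pick distinct points `p i ∈ U i` (a non-trivial weakly mixing system has no isolated points) and
pairwise disjoint closed balls `K i = closedBall (p i) ε ⊆ U i`. By Furstenberg's intersection
lemma there is a single time `m` at which every small ball around `p i` reaches every small ball
around `p j`. Gluing these transition orbits along an arbitrary itinerary `s` gives a
pseudo-orbit that visits the ball of `p (s n)` at time `m * n`, and shadowing turns it into a true
orbit. Hence the points whose `f^m`-orbit stays in `⋃ i, K i` form a closed `f^m`-invariant set
on which the itinerary map is a factor map onto the full shift.
-/

open Filter Topology Metric

section WeaklyMixing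

variable [TopologicalSpace X] {f : X → X}

def hittingTimes (f : X → X) (U V : Set X) : Set ℕ := {n | (f^[n] '' U ∩ V).Nonempty}

lemma WeaklyMixing.exists_mem_hittingTimes_inter (hwm : WeaklyMixing f)
    {U₁ V₁ U₂ V₂ : Set X} (hU₁ : IsOpen U₁) (hU₁' : U₁.Nonempty) (hV₁ : IsOpen V₁)
    (hV₁' : V₁.Nonempty) (hU₂ : IsOpen U₂) (hU₂' : U₂.Nonempty) (hV₂ : IsOpen V₂)
    (hV₂' : V₂.Nonempty) :
    ∃ n, 1 ≤ n ∧ n ∈ hittingTimes f U₁ U₂ ∩ hittingTimes f V₁ V₂ := by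
  obtain ⟨n, hn, _, ⟨q, hq, rfl⟩, hqV⟩ :=
    hwm _ _ (hU₁.prod hV₁) (hU₁'.prod hV₁') (hU₂.prod hV₂) (hU₂'.prod hV₂')
  change (Prod.map f f)^[n] q ∈ U₂ ×ˢ V₂ at hqV
  rw [Prod.map_iterate] at hqV
  exact ⟨n, hn, ⟨_, mem_image_of_mem _ hq.1, hqV.1⟩, ⟨_, mem_image_of_mem _ hq.2, hqV.2⟩⟩

lemma WeaklyMixing.topTransitive (hwm : WeaklyMixing f) : TopTransitive f :=
  fun _ _ hU hU' hV hV' =>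
    let ⟨n, hn, h, _⟩ := hwm.exists_mem_hittingTimes_inter hU hU' hU hU' hV hV' hV hV'
    ⟨n, hn, h⟩

lemma WeaklyMixing.exists_hittingTimes_subset_inter (hf : Continuous f) (hwm : WeaklyMixing f)
    {U₁ V₁ U₂ V₂ : Set X} (hU₁ : IsOpen U₁) (hU₁' : U₁.Nonempty) (hV₁ : IsOpen V₁)
    (hV₁' : V₁.Nonempty) (hU₂ : IsOpen U₂) (hU₂' : U₂.Nonempty) (hV₂ : IsOpen V₂)
    (hV₂' : V₂.Nonempty) :
    ∃ U V, IsOpen U ∧ U.Nonempty ∧ IsOpen V ∧ V.Nonempty ∧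
      hittingTimes f U V ⊆ hittingTimes f U₁ V₁ ∩ hittingTimes f U₂ V₂ := by
  obtain ⟨n, -, ⟨_, ⟨x, hx, rfl⟩, hx'⟩, ⟨_, ⟨y, hy, rfl⟩, hy'⟩⟩ :=
    hwm.exists_mem_hittingTimes_inter hU₁ hU₁' hV₁ hV₁' hU₂ hU₂' hV₂ hV₂'
  refine ⟨U₁ ∩ f^[n] ⁻¹' U₂, V₁ ∩ f^[n] ⁻¹' V₂, hU₁.inter (hU₂.preimage (hf.iterate n)),
    ⟨x, hx, hx'⟩, hV₁.inter (hV₂.preimage (hf.iterate n)), ⟨y, hy, hy'⟩, ?_⟩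
  rintro k ⟨_, ⟨a, ha, rfl⟩, hb⟩
  refine ⟨⟨_, mem_image_of_mem _ ha.1, hb.1⟩, ⟨_, mem_image_of_mem _ ha.2, ?_⟩⟩
  rw [Commute.iterate_iterate_self f k n a]
  exact hb.2

lemma WeaklyMixing.exists_hittingTimes_subset_iInter [Nonempty X] (hf : Continuous f)
    (hwm : WeaklyMixing f) {ι : Type*} [Finite ι] {U V : ι → Set X} (hU : ∀ i, IsOpen (U i))
    (hU' : ∀ i, (U i).Nonempty) (hV : ∀ i, IsOpen (V i)) (hV' : ∀ i, (V i).Nonempty) :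
    ∃ U₀ V₀, IsOpen U₀ ∧ U₀.Nonempty ∧ IsOpen V₀ ∧ V₀.Nonempty ∧
      hittingTimes f U₀ V₀ ⊆ ⋂ i, hittingTimes f (U i) (V i) := by
  classical
  cases nonempty_fintype ι
  suffices ∀ s : Finset ι, ∃ U₀ V₀, IsOpen U₀ ∧ U₀.Nonempty ∧ IsOpen V₀ ∧ V₀.Nonempty ∧
      hittingTimes f U₀ V₀ ⊆ ⋂ i ∈ s, hittingTimes f (U i) (V i) by
    simpa using this Finset.univ
  intro s
  induction s using Finset.induction_on with
  | empty => exact ⟨univ, univ, isOpen_univ, univ_nonempty, isOpen_univ, univ_nonempty, by simp⟩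
  | insert i s _ ih =>
    obtain ⟨U₀, V₀, hU₀, hU₀', hV₀, hV₀', hsub⟩ := ih
    obtain ⟨U₁, V₁, hU₁, hU₁', hV₁, hV₁', hsub₁⟩ :=
      hwm.exists_hittingTimes_subset_inter hf (hU i) (hU' i) (hV i) (hV' i) hU₀ hU₀' hV₀ hV₀'
    refine ⟨U₁, V₁, hU₁, hU₁', hV₁, hV₁', fun n hn => ?_⟩
    rw [Finset.set_biInter_insert]
    exact ⟨(hsub₁ hn).1, hsub (hsub₁ hn).2⟩

lemma WeaklyMixing.exists_common_hittingTime [Nonempty X] (hf : Continuous f)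
    (hwm : WeaklyMixing f) {ι : Type*} [Finite ι] {U V : ι → Set X} (hU : ∀ i, IsOpen (U i))
    (hU' : ∀ i, (U i).Nonempty) (hV : ∀ i, IsOpen (V i)) (hV' : ∀ i, (V i).Nonempty) :
    ∃ n, 1 ≤ n ∧ ∀ i, n ∈ hittingTimes f (U i) (V i) := by
  obtain ⟨U₀, V₀, hU₀, hU₀', hV₀, hV₀', hsub⟩ :=
    hwm.exists_hittingTimes_subset_iInter hf hU hU' hV hV'
  obtain ⟨n, hn, hhit⟩ := hwm.topTransitive U₀ V₀ hU₀ hU₀' hV₀ hV₀'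
  exact ⟨n, hn, mem_iInter.1 (hsub hhit)⟩

lemma WeaklyMixing.not_isOpen_singleton [T2Space X] (hwm : WeaklyMixing f)
    (hX : ∃ a b : X, a ≠ b) (x : X) : ¬IsOpen {x} := by
  intro hx
  obtain ⟨a, b, hab⟩ := hX
  obtain ⟨A, B, hA, hB, ha, hb, hAB⟩ := t2_separation hab
  obtain ⟨n, -, hnA, hnB⟩ := hwm.exists_mem_hittingTimes_inter hx (singleton_nonempty x) hx
    (singleton_nonempty x) hA ⟨a, ha⟩ hB ⟨b, hb⟩
  simp only [hittingTimes, mem_ofPred_eq, image_singleton, singleton_inter_nonempty] at hnA hnB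
  exact disjoint_left.1 hAB hnA hnB

lemma WeaklyMixing.infinite_of_isOpen [T2Space X] (hwm : WeaklyMixing f)
    (hX : ∃ a b : X, a ≠ b) {U : Set X} (hU : IsOpen U) (hU' : U.Nonempty) : U.Infinite := by
  obtain ⟨x, hx⟩ := hU'
  have : NeBot (𝓝[≠] x) :=
    ⟨fun h => hwm.not_isOpen_singleton hX x ((isOpen_singleton_iff_punctured_nhds x).2 h)⟩
  exact infinite_of_mem_nhds x (hU.mem_nhds hx)

end WeaklyMixing

lemma exists_injective_forall_mem_of_infinite {α : Type*} :
    ∀ {k : ℕ} {S : Fin k → Set α}, (∀ i, (S i).Infinite) →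
      ∃ p : Fin k → α, Injective p ∧ ∀ i, p i ∈ S i
  | 0, _, _ => ⟨finZeroElim, fun i => i.elim0, fun i => i.elim0⟩
  | _ + 1, S, hS => by
    obtain ⟨p, hp, hpS⟩ := exists_injective_forall_mem_of_infinite fun i => hS i.succ
    obtain ⟨x, hx, hxp⟩ := (hS 0).exists_notMem_finite (finite_range p)
    exact ⟨Fin.cons x p, Fin.cons_injective_iff.2 ⟨hxp, hp⟩, Fin.cases hx hpS⟩

lemma exists_pos_closedBall_subset_pairwise_disjoint [MetricSpace X] {ι : Type*} [Finite ι]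
    {p : ι → X} (hp : Injective p) {U : ι → Set X} (hU : ∀ i, U i ∈ 𝓝 (p i)) :
    ∃ ε > 0, (∀ i, closedBall (p i) ε ⊆ U i) ∧
      Pairwise (Disjoint on fun i => closedBall (p i) ε) := by
  have hsub : ∀ᶠ ε in 𝓝 (0 : ℝ), ∀ i, closedBall (p i) ε ⊆ U i :=
    eventually_all.2 fun i => eventually_closedBall_subset (hU i)
  have hdisj : ∀ᶠ ε in 𝓝 (0 : ℝ), ∀ i j, i ≠ j →
      Disjoint (closedBall (p i) ε) (closedBall (p j) ε) := by
    refine eventually_all.2 fun i => eventually_all.2 fun j => ?_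
    by_cases hij : i = j
    · exact .of_forall fun _ h => absurd hij h
    filter_upwards [eventually_lt_nhds (half_pos (dist_pos.2 (hp.ne hij)))] with ε hε _
    exact closedBall_disjoint_closedBall (by linarith)
  obtain ⟨ε, hε, hsub, hdisj⟩ := (hsub.and hdisj).exists_gt
  exact ⟨ε, hε, hsub, fun i j => hdisj i j⟩

section Coding

variable {ι : Type*} (K : ι → Set X) (g : X → X)

def codingSet : Set X := {x | ∀ n, g^[n] x ∈ ⋃ i, K i}

open Classical in
noncomputable def pieceIndex [Inhabited ι] (x : X) : ι :=
  if h : ∃ i, x ∈ K i then h.choose else default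

noncomputable def itinerary [Inhabited ι] (x : X) (n : ℕ) : ι := pieceIndex K (g^[n] x)

variable {K g}

lemma isClosed_codingSet [TopologicalSpace X] [Finite ι] (hg : Continuous g)
    (hKc : ∀ i, IsClosed (K i)) : IsClosed (codingSet K g) := by
  simp only [codingSet, ofPred_forall]
  exact isClosed_iInter fun n => (isClosed_iUnion_of_finite hKc).preimage (hg.iterate n)

lemma mapsTo_codingSet : MapsTo g (codingSet K g) (codingSet K g) :=
  fun _ hx n => hx (n + 1)

variable [Inhabited ι]

lemma pieceIndex_eq (hK : Pairwise (Disjoint on K)) {x : X} {i : ι} (hx : x ∈ K i) :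
    pieceIndex K x = i := by
  have h : ∃ j, x ∈ K j := ⟨i, hx⟩
  rw [pieceIndex, dif_pos h]
  by_contra hne
  exact disjoint_left.1 (hK hne) h.choose_spec hx

lemma mem_pieceIndex (hK : Pairwise (Disjoint on K)) {x : X} (hx : x ∈ ⋃ i, K i) :
    x ∈ K (pieceIndex K x) := by
  obtain ⟨i, hi⟩ := mem_iUnion.1 hx
  rwa [pieceIndex_eq hK hi]

lemma mem_itinerary_zero (hK : Pairwise (Disjoint on K)) {x : X} (hx : x ∈ codingSet K g) :
    x ∈ K (itinerary K g x 0) :=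
  mem_pieceIndex hK (hx 0)

lemma itinerary_eq_of_forall_mem (hK : Pairwise (Disjoint on K)) {x : X} {s : ℕ → ι}
    (hs : ∀ n, g^[n] x ∈ K (s n)) : itinerary K g x = s :=
  funext fun n => pieceIndex_eq hK (hs n)

variable [TopologicalSpace X] [TopologicalSpace ι]

lemma continuousOn_pieceIndex [Finite ι] (hKc : ∀ i, IsClosed (K i))
    (hK : Pairwise (Disjoint on K)) : ContinuousOn (pieceIndex K) (⋃ i, K i) := by
  refine continuousOn_iff.2 fun x hx t _ hxt => ⟨⋂ j ∈ {pieceIndex K x}ᶜ, (K j)ᶜ,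
    (toFinite _).isOpen_biInter fun j _ => (hKc j).isOpen_compl, ?_, ?_⟩
  · simp only [mem_iInter, mem_compl_iff, mem_singleton_iff]
    intro j hj hxj
    exact hj (pieceIndex_eq hK hxj).symm
  · rintro y ⟨hy, hyK⟩
    by_contra hyt
    have hne : pieceIndex K y ≠ pieceIndex K x := fun h => hyt (by rwa [mem_preimage, h])
    exact mem_iInter₂.1 hy _ hne (mem_pieceIndex hK hyK)

lemma continuousOn_itinerary [Finite ι] (hg : Continuous g) (hKc : ∀ i, IsClosed (K i))
    (hK : Pairwise (Disjoint on K)) : ContinuousOn (itinerary K g) (codingSet K g) :=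
  continuousOn_pi.2 fun n =>
    (continuousOn_pieceIndex hKc hK).comp (hg.iterate n).continuousOn fun _ hx => hx n

end Coding

lemma factorOntoShift_itinerary [TopologicalSpace X] {f : X → X} (hf : Continuous f) (m k : ℕ)
    {K : Fin (k + 1) → Set X} (hKc : ∀ i, IsClosed (K i)) (hK : Pairwise (Disjoint on K))
    (hK' : ∀ s : ℕ → Fin (k + 1), ∃ x, ∀ n, (f^[m])^[n] x ∈ K (s n)) :
    FactorOntoShift f m (codingSet K f^[m]) (k + 1) (itinerary K f^[m]) := by
  refine ⟨continuousOn_itinerary (hf.iterate m) hKc hK, eq_univ_of_forall fun s => ?_,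
    fun _ _ => rfl⟩
  obtain ⟨x, hx⟩ := hK' s
  exact ⟨x, fun n => mem_iUnion_of_mem _ (hx n), itinerary_eq_of_forall_mem hK hx⟩

section Shadowing

variable [MetricSpace X] {f : X → X}

lemma isPseudoOrbit_blocks_s12 {m : ℕ} (hm : 0 < m) {δ : ℝ} (hδ : 0 < δ) {w : ℕ → X}
    (hw : ∀ n, dist (f^[m] (w n)) (w (n + 1)) < δ) :
    IsPseudoOrbit f δ fun k => f^[k % m] (w (k / m)) := by
  intro k
  have hk := Nat.mod_add_div k m
  rcases Nat.lt_or_eq_of_le (Nat.mod_lt k hm) with hlt | heq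
  · obtain ⟨hq, hr⟩ : (k + 1) / m = k / m ∧ (k + 1) % m = k % m + 1 :=
      (Nat.div_mod_unique hm).2 ⟨by omega, hlt⟩
    simp only [hq, hr, ← iterate_succ_apply' f, dist_self, hδ]
  · obtain ⟨hq, hr⟩ : (k + 1) / m = k / m + 1 ∧ (k + 1) % m = 0 :=
      (Nat.div_mod_unique hm).2 ⟨by rw [Nat.mul_succ]; omega, hm⟩
    simp only [hq, hr, iterate_zero_apply, ← iterate_succ_apply' f, heq]
    exact hw _

lemma HasShadowing.exists_iterate_orbit_follows_itinerary [Nonempty X] (hf : Continuous f)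
    (hsh : HasShadowing f) (hwm : WeaklyMixing f) {ι : Type*} [Finite ι] (p : ι → X) {ε : ℝ}
    (hε : 0 < ε) : ∃ m, 1 ≤ m ∧ ∀ s : ℕ → ι, ∃ z, ∀ n, dist (f^[m * n] z) (p (s n)) < ε := by
  obtain ⟨δ, hδ, hshadow⟩ := hsh (ε / 2) (half_pos hε)
  set η := min δ ε
  have hη : 0 < η := lt_min hδ hε
  obtain ⟨m, hm, hhit⟩ := hwm.exists_common_hittingTime hf
    (U := fun q : ι × ι => ball (p q.1) (η / 2)) (V := fun q => ball (p q.2) (η / 2))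
    (fun _ => isOpen_ball) (fun _ => nonempty_ball.2 (half_pos hη))
    (fun _ => isOpen_ball) (fun _ => nonempty_ball.2 (half_pos hη))
  have htransit : ∀ i j, ∃ y, dist y (p i) < η / 2 ∧ dist (f^[m] y) (p j) < η / 2 := by
    intro i j
    obtain ⟨_, ⟨y, hy, rfl⟩, hy'⟩ := hhit (i, j)
    exact ⟨y, hy, hy'⟩
  choose y hy hy' using htransit
  refine ⟨m, hm, fun s => ?_⟩
  set w := fun n => y (s n) (s (n + 1))
  have hw : ∀ n, dist (f^[m] (w n)) (w (n + 1)) < δ := fun n => calc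
    _ ≤ dist (f^[m] (w n)) (p (s (n + 1))) + dist (w (n + 1)) (p (s (n + 1))) :=
      dist_triangle_right _ _ _
    _ < η / 2 + η / 2 := add_lt_add (hy' _ _) (hy _ _)
    _ ≤ δ := by linarith [min_le_left δ ε]
  obtain ⟨z, hz⟩ := hshadow _ (isPseudoOrbit_blocks_s12 hm hδ hw)
  refine ⟨z, fun n => ?_⟩
  have hzn := hz (m * n)
  simp only [Nat.mul_mod_right, Nat.mul_div_cancel_left n hm, iterate_zero_apply] at hzn
  calc dist (f^[m * n] z) (p (s n)) ≤ dist (f^[m * n] z) (w n) + dist (w n) (p (s n)) :=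
        dist_triangle _ _ _
    _ < ε / 2 + η / 2 := add_lt_add hzn (hy _ _)
    _ ≤ ε := by linarith [min_le_right δ ε]

end Shadowing

theorem weak_mixing_shift_factor_in_open_sets_general [MetricSpace X]
    (f : X → X) (hf : Continuous f) (hX : ∃ x y : X, x ≠ y)
    (hsh : HasShadowing f)
    (hwm : WeaklyMixing f) :
    ∀ d : ℕ, 1 ≤ d → ∀ U : Fin (d + 1) → Set X,
      (∀ i, IsOpen (U i) ∧ (U i).Nonempty) →
      ∃ m : ℕ, 1 ≤ m ∧ ∃ Y : Set X, IsClosed Y ∧ Set.MapsTo f^[m] Y Y ∧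
        ∃ π : X → (ℕ → Fin (d + 1)), FactorOntoShift f m Y (d + 1) π ∧
          ∀ i : Fin (d + 1), ∀ y ∈ Y, π y 0 = i → y ∈ U i := by
  intro d _ U hU
  have : Nonempty X := let ⟨x, _⟩ := hX; ⟨x⟩
  obtain ⟨p, hp, hpU⟩ := exists_injective_forall_mem_of_infinite fun i =>
    hwm.infinite_of_isOpen hX (hU i).1 (hU i).2
  obtain ⟨ε, hε, hεU, hK⟩ :=
    exists_pos_closedBall_subset_pairwise_disjoint hp fun i => (hU i).1.mem_nhds (hpU i)
  obtain ⟨m, hm, hfollow⟩ := hsh.exists_iterate_orbit_follows_itinerary hf hwm p hε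
  refine ⟨m, hm, _, isClosed_codingSet (hf.iterate m) fun _ => isClosed_closedBall,
    mapsTo_codingSet, _, factorOntoShift_itinerary hf m d (fun _ => isClosed_closedBall) hK
      fun s => ?_, fun i y hy hy0 => hεU i (hy0 ▸ mem_itinerary_zero hK hy)⟩
  obtain ⟨z, hz⟩ := hfollow s
  exact ⟨z, fun n => by rw [← iterate_mul]; exact (hz n).le⟩

theorem weak_mixing_shift_factor_in_open_sets [MetricSpace X] [CompactSpace X]
    (f : X → X) (hf : Continuous f) (hX : ∃ x y : X, x ≠ y)
    (hnw : ∀ x : X, NonWanderingPt f x) (hsh : HasShadowing f)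
    (hwm : WeaklyMixing f) :
    ∀ d : ℕ, 1 ≤ d → ∀ U : Fin (d + 1) → Set X,
      (∀ i, IsOpen (U i) ∧ (U i).Nonempty) →
      ∃ m : ℕ, 1 ≤ m ∧ ∃ Y : Set X, IsClosed Y ∧ Set.MapsTo f^[m] Y Y ∧
        ∃ π : X → (ℕ → Fin (d + 1)), FactorOntoShift f m Y (d + 1) π ∧
          ∀ i : Fin (d + 1), ∀ y ∈ Y, π y 0 = i → y ∈ U i :=
  weak_mixing_shift_factor_in_open_sets_general f hf hX hsh hwm
end
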